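/- arXiv:math/9902121 — 11 statements merged into one kernel-verified Lean document; each statement's English description precedes it below -/
import Mathlib

section
/- For m > 0 and x > 0, V_m(x) < 1/sqrt(x^2 + m). -/
noncomputable def V (m x : ℝ) : ℝ :=
  (1 / Real.Gamma (m + 1)) *
    ∫ u in Set.Ioi (0 : ℝ), u ^ m * Real.exp (-u) / Real.sqrt (x ^ 2 + u)

open MeasureTheory Set Real

set_option maxHeartbeats 1000000 in
theorem stmt_0 (m x : ℝ) (hm : 0 < m) (hx : 0 < x) :
    V m x < 1 / Real.sqrt (x ^ 2 + m) := by
  have hc : (0:ℝ) < x ^ 2 + m := by positivity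
  set s : ℝ := Real.sqrt (x ^ 2 + m) with hs_def
  have hs0 : 0 < s := Real.sqrt_pos.mpr hc
  have hs2 : s ^ 2 = x ^ 2 + m := Real.sq_sqrt hc.le
  set a : ℝ := m ^ 2 / (2 * s ^ 3) with ha_def
  set b : ℝ := (x ^ 2 + s ^ 2) / (2 * s ^ 3) with hb_def
  set F : ℝ → ℝ := fun u => u ^ m * Real.exp (-u) / Real.sqrt (x ^ 2 + u) with hF_def
  set H : ℝ → ℝ := fun u =>
      a * (Real.exp (-u) * u ^ (m - 1)) + b * (Real.exp (-u) * u ^ m) with hH_def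
  -- pointwise comparison
  have key : ∀ u : ℝ, 0 < u → (F u ≤ H u ∧ (u ≠ m → F u < H u)) := by
    intro u hu
    have hxu : (0:ℝ) < x ^ 2 + u := by positivity
    set w : ℝ := Real.sqrt (x ^ 2 + u) with hw_def
    have hw0 : 0 < w := Real.sqrt_pos.mpr hxu
    have hw2 : w ^ 2 = x ^ 2 + u := Real.sq_sqrt hxu.le
    have hfac : w * (m ^ 2 + (x ^ 2 + s ^ 2) * u) - 2 * s ^ 3 * u
        = (s - w) ^ 2 * (s ^ 2 * w + x ^ 2 * (w + 2 * s)) := by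
      have hm' : m = s ^ 2 - x ^ 2 := by linarith
      have hu' : u = w ^ 2 - x ^ 2 := by linarith
      rw [hm', hu']; ring
    have hpos2 : 0 < s ^ 2 * w + x ^ 2 * (w + 2 * s) := by positivity
    have hE : 2 * s ^ 3 * u ≤ w * (m ^ 2 + (x ^ 2 + s ^ 2) * u) := by nlinarith [sq_nonneg (s - w)]
    have hrw : u ^ m = u ^ (m - 1) * u := by
      rw [← Real.rpow_add_one hu.ne' (m - 1)]; norm_num
    have hHF : H u - F u =
        Real.exp (-u) * u ^ (m - 1) * (a + b * u - u / w) := by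
      simp only [hH_def, hF_def, ← hw_def]
      rw [hrw]; field_simp
    have hab : a + b * u = (m ^ 2 + (x ^ 2 + s ^ 2) * u) / (2 * s ^ 3) := by
      rw [ha_def, hb_def]; ring
    have hmain : u / w ≤ a + b * u := by
      rw [hab, div_le_div_iff₀ hw0 (by positivity)]
      linarith
    have hepos : 0 < Real.exp (-u) * u ^ (m - 1) := by positivity
    constructor
    · have h0 : 0 ≤ H u - F u := by
        rw [hHF]; exact mul_nonneg hepos.le (sub_nonneg.mpr hmain)
      exact sub_nonneg.mp h0
    · intro hne
      have hwne : s ≠ w := by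
        intro h; apply hne
        have : s ^ 2 = w ^ 2 := by rw [h]
        rw [hs2, hw2] at this; linarith
      have hsq : 0 < (s - w) ^ 2 :=
        lt_of_le_of_ne (sq_nonneg _) (Ne.symm (pow_ne_zero 2 (sub_ne_zero.mpr hwne)))
      have hE' : 2 * s ^ 3 * u < w * (m ^ 2 + (x ^ 2 + s ^ 2) * u) := by
        nlinarith [mul_pos hsq hpos2]
      have hmain' : u / w < a + b * u := by
        rw [hab, div_lt_div_iff₀ hw0 (by positivity)]
        linarith
      have h0 : 0 < H u - F u := by
        rw [hHF]; exact mul_pos hepos (sub_pos.mpr hmain')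
      exact sub_pos.mp h0
  -- integrability
  have hI1 : IntegrableOn (fun u : ℝ => Real.exp (-u) * u ^ (m - 1)) (Ioi 0) :=
    Real.GammaIntegral_convergent hm
  have hI2 : IntegrableOn (fun u : ℝ => Real.exp (-u) * u ^ m) (Ioi 0) := by
    have := Real.GammaIntegral_convergent (show (0:ℝ) < m + 1 by linarith)
    simpa using this
  have hHint : IntegrableOn H (Ioi 0) := (hI1.const_mul a).add (hI2.const_mul b)
  have hFmeas : Measurable F := by
    apply Measurable.div
    · exact (measurable_id.pow_const m).mul (Real.measurable_exp.comp measurable_neg)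
    · exact Real.continuous_sqrt.measurable.comp (measurable_const.add measurable_id)
  have hFint : IntegrableOn F (Ioi 0) := by
    refine Integrable.mono' (hI2.const_mul (1 / x)) hFmeas.aestronglyMeasurable ?_
    refine (ae_restrict_iff' measurableSet_Ioi).2 (Filter.Eventually.of_forall ?_)
    intro u hu
    have hu0 : (0:ℝ) < u := hu
    have hxle : x ≤ Real.sqrt (x ^ 2 + u) := by
      have h := Real.sqrt_le_sqrt (show x ^ 2 ≤ x ^ 2 + u by linarith)
      rwa [Real.sqrt_sq hx.le] at h
    have hF0 : 0 ≤ F u := by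
      simp only [hF_def]; positivity
    rw [Real.norm_of_nonneg hF0]
    have : F u ≤ u ^ m * Real.exp (-u) / x :=
      div_le_div_of_nonneg_left (by positivity) hx hxle
    calc F u ≤ u ^ m * Real.exp (-u) / x := this
      _ = 1 / x * (Real.exp (-u) * u ^ m) := by ring
  -- strict integral inequality
  have hsub : IntegrableOn (fun u => H u - F u) (Ioi 0) := hHint.sub hFint
  have hpos : 0 < ∫ u in Ioi (0:ℝ), (H u - F u) := by
    rw [setIntegral_pos_iff_support_of_nonneg_ae ?_ hsub]
    · refine lt_of_lt_of_le ?_ (measure_mono (show Ioi m ⊆ Function.support (fun u => H u - F u) ∩ Ioi 0 from ?_))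
      · rw [Real.volume_Ioi]; exact ENNReal.zero_lt_top
      · intro u hu
        have hu0 : 0 < u := lt_trans hm hu
        have := (key u hu0).2 (ne_of_gt hu)
        exact ⟨by simp [Function.mem_support]; intro h; linarith [this], hu0⟩
    · refine (ae_restrict_iff' measurableSet_Ioi).2 (Filter.Eventually.of_forall ?_)
      intro u hu
      have := (key u hu).1
      simp only [Pi.zero_apply]; linarith
  have hlt : ∫ u in Ioi (0:ℝ), F u < ∫ u in Ioi (0:ℝ), H u := by
    rw [integral_sub hHint hFint] at hpos; linarith
  -- value of ∫ H
  have hG1 : ∫ u in Ioi (0:ℝ), Real.exp (-u) * u ^ (m - 1) = Real.Gamma m :=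
    (Real.Gamma_eq_integral hm).symm
  have hG2 : ∫ u in Ioi (0:ℝ), Real.exp (-u) * u ^ m = Real.Gamma (m + 1) := by
    rw [Real.Gamma_eq_integral (show (0:ℝ) < m + 1 by linarith)]
    norm_num
  have hHval : ∫ u in Ioi (0:ℝ), H u = Real.Gamma (m + 1) / s := by
    have e1 : (∫ u in Ioi (0:ℝ), a * (Real.exp (-u) * u ^ (m - 1)))
        = a * ∫ u in Ioi (0:ℝ), Real.exp (-u) * u ^ (m - 1) := by
      simpa [smul_eq_mul] using
        integral_smul (μ := volume.restrict (Ioi 0)) a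
          (fun u : ℝ => Real.exp (-u) * u ^ (m - 1))
    have e2 : (∫ u in Ioi (0:ℝ), b * (Real.exp (-u) * u ^ m))
        = b * ∫ u in Ioi (0:ℝ), Real.exp (-u) * u ^ m := by
      simpa [smul_eq_mul] using
        integral_smul (μ := volume.restrict (Ioi 0)) b
          (fun u : ℝ => Real.exp (-u) * u ^ m)
    have hsplit : (∫ u in Ioi (0:ℝ),
          (a * (Real.exp (-u) * u ^ (m - 1)) + b * (Real.exp (-u) * u ^ m)))
        = (∫ u in Ioi (0:ℝ), a * (Real.exp (-u) * u ^ (m - 1)))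
          + ∫ u in Ioi (0:ℝ), b * (Real.exp (-u) * u ^ m) :=
      integral_add (hI1.const_mul a) (hI2.const_mul b)
    simp only [hH_def]
    rw [hsplit, e1, e2, hG1, hG2, Real.Gamma_add_one hm.ne', ha_def, hb_def]
    have hx2 : x ^ 2 = s ^ 2 - m := by linarith
    rw [hx2]
    field_simp
    ring
  -- conclude
  have hGpos : 0 < Real.Gamma (m + 1) := Real.Gamma_pos_of_pos (by linarith)
  have : V m x = (1 / Real.Gamma (m + 1)) * ∫ u in Ioi (0:ℝ), F u := rfl
  rw [this]
  calc (1 / Real.Gamma (m + 1)) * ∫ u in Ioi (0:ℝ), F u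
      < (1 / Real.Gamma (m + 1)) * (Real.Gamma (m + 1) / s) := by
        rw [← hHval]
        exact mul_lt_mul_of_pos_left hlt (by positivity)
    _ = 1 / s := by field_simp
end

section
/- For m > -1 and x > 0, V_m(x) > 1/sqrt(x^2 + m + 1). -/
open MeasureTheory Set

lemma tangent_le (a b : ℝ) (ha : 0 < a) (hb : 0 < b) :
    1/b - (a^2 - b^2)/(2*b^3) ≤ 1/a := by
  have key : 1/a - (1/b - (a^2-b^2)/(2*b^3)) = (a-b)^2*(a+2*b)/(2*a*b^3) := by
    field_simp; ring
  have h2 : 0 ≤ (a-b)^2*(a+2*b)/(2*a*b^3) := by positivity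
  linarith

lemma tangent_lt (a b : ℝ) (ha : 0 < a) (hb : 0 < b) (hab : a ≠ b) :
    1/b - (a^2 - b^2)/(2*b^3) < 1/a := by
  have key : 1/a - (1/b - (a^2-b^2)/(2*b^3)) = (a-b)^2*(a+2*b)/(2*a*b^3) := by
    field_simp; ring
  have h0 : a - b ≠ 0 := sub_ne_zero.mpr hab
  have h1 : 0 < (a-b)^2 := lt_of_le_of_ne (sq_nonneg _) (Ne.symm (pow_ne_zero 2 h0))
  have h2 : 0 < (a-b)^2*(a+2*b)/(2*a*b^3) :=
    div_pos (mul_pos h1 (by linarith)) (by positivity)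
  linarith

theorem stmt_1 (m x : ℝ) (hm : -1 < m) (hx : 0 < x) :
    1 / Real.sqrt (x ^ 2 + m + 1) < V m x := by
  have hm1 : 0 < m + 1 := by linarith
  have hm2 : 0 < m + 2 := by linarith
  have hΓ : 0 < Real.Gamma (m + 1) := Real.Gamma_pos_of_pos hm1
  set c : ℝ := x ^ 2 + (m + 1) with hc_def
  have hc : 0 < c := by positivity
  set b : ℝ := Real.sqrt c with hb_def
  have hb : 0 < b := Real.sqrt_pos.mpr hc
  have hb2 : b ^ 2 = c := Real.sq_sqrt hc.le
  -- sqrt facts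
  have ha_pos : ∀ u : ℝ, 0 < u → 0 < Real.sqrt (x ^ 2 + u) := by
    intro u hu
    exact Real.sqrt_pos.mpr (by positivity)
  have ha_sq : ∀ u : ℝ, 0 < u → (Real.sqrt (x ^ 2 + u)) ^ 2 = x ^ 2 + u := by
    intro u hu
    exact Real.sq_sqrt (by positivity)
  -- the weight
  set F : ℝ → ℝ := fun u => u ^ m * Real.exp (-u) with hF_def
  -- integrability of F
  have hF_int : IntegrableOn F (Ioi 0) := by
    have h := Real.GammaIntegral_convergent hm1
    simp only [add_sub_cancel_right] at h
    exact h.congr_fun (fun u _ => mul_comm _ _) measurableSet_Ioi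
  -- integrability of u * F u
  have hF1_int : IntegrableOn (fun u => u * F u) (Ioi 0) := by
    have h := Real.GammaIntegral_convergent hm2
    have h2 : (m + 2 - 1 : ℝ) = m + 1 := by ring
    rw [h2] at h
    refine h.congr_fun (fun u hu => ?_) measurableSet_Ioi
    have hu : (0:ℝ) < u := hu
    beta_reduce
    rw [Real.rpow_add_one hu.ne']
    simp only [hF_def]
    ring
  -- the integrand G
  set G : ℝ → ℝ := fun u => u ^ m * Real.exp (-u) / Real.sqrt (x ^ 2 + u) with hG_def
  have hG_meas : AEStronglyMeasurable G (volume.restrict (Ioi 0)) := by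
    apply Measurable.aestronglyMeasurable
    fun_prop
  have hG_int : IntegrableOn G (Ioi 0) := by
    refine Integrable.mono (hF_int.div_const x) hG_meas ?_
    filter_upwards [ae_restrict_mem measurableSet_Ioi] with u hu
    have hu : (0:ℝ) < u := hu
    have h1 : 0 < Real.sqrt (x ^ 2 + u) := ha_pos u hu
    have hFu : 0 ≤ F u := by positivity
    have hGu : 0 ≤ G u := by simp only [hG_def]; positivity
    rw [Real.norm_of_nonneg hGu, Real.norm_of_nonneg (by positivity : (0:ℝ) ≤ F u / x)]
    have hxa : x ≤ Real.sqrt (x ^ 2 + u) := by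
      rw [show x ^ 2 + u = x ^ 2 + u from rfl]
      calc x = Real.sqrt (x ^ 2) := by rw [Real.sqrt_sq hx.le]
        _ ≤ Real.sqrt (x ^ 2 + u) := Real.sqrt_le_sqrt (by linarith)
    simp only [hG_def, hF_def]
    gcongr
  -- the tangent line function
  set L : ℝ → ℝ := fun u => F u * (1 / b - (u - (m + 1)) / (2 * b ^ 3)) with hL_def
  have hL_eq : ∀ u, L u = (1 / b + (m + 1) / (2 * b ^ 3)) * F u
      - (1 / (2 * b ^ 3)) * (u * F u) := by
    intro u; simp only [hL_def]; ring
  have hL_int : IntegrableOn L (Ioi 0) := by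
    refine Integrable.congr ?_ (Filter.Eventually.of_forall fun u => (hL_eq u).symm)
    exact (hF_int.const_mul _).sub (hF1_int.const_mul _)
  -- value of ∫ F and ∫ u * F
  have hIF : ∫ u in Ioi (0:ℝ), F u = Real.Gamma (m + 1) := by
    rw [Real.Gamma_eq_integral hm1]
    simp only [add_sub_cancel_right]
    exact setIntegral_congr_fun measurableSet_Ioi fun u _ => mul_comm _ _
  have hIF1 : ∫ u in Ioi (0:ℝ), u * F u = (m + 1) * Real.Gamma (m + 1) := by
    have h2 : Real.Gamma (m + 2) = (m + 1) * Real.Gamma (m + 1) := by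
      have := Real.Gamma_add_one (s := m + 1) hm1.ne'
      rw [show m + 1 + 1 = m + 2 by ring] at this
      exact this
    rw [← h2, Real.Gamma_eq_integral hm2, show (m + 2 - 1 : ℝ) = m + 1 by ring]
    refine setIntegral_congr_fun measurableSet_Ioi fun u hu => ?_
    have hu : (0:ℝ) < u := hu
    rw [Real.rpow_add_one hu.ne']
    simp only [hF_def]; ring
  -- value of ∫ L
  have hIL : ∫ u in Ioi (0:ℝ), L u = Real.Gamma (m + 1) / b := by
    have e1 : ∫ u in Ioi (0:ℝ), L u
        = (1 / b + (m + 1) / (2 * b ^ 3)) * (∫ u in Ioi (0:ℝ), F u)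
            - (1 / (2 * b ^ 3)) * ∫ u in Ioi (0:ℝ), u * F u := by
      rw [← integral_const_mul, ← integral_const_mul,
        ← integral_sub (hF_int.const_mul _) (hF1_int.const_mul _)]
      exact setIntegral_congr_fun measurableSet_Ioi fun u _ => hL_eq u
    rw [e1, hIF, hIF1]
    field_simp
    ring
  -- pointwise: L u ≤ G u on Ioi 0, strict for u ≠ m+1
  have hpt_le : ∀ u : ℝ, 0 < u → L u ≤ G u := by
    intro u hu
    have ha := ha_pos u hu
    have haq := ha_sq u hu
    have key := tangent_le (Real.sqrt (x ^ 2 + u)) b ha hb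
    rw [haq, hb2] at key
    have hFu : 0 ≤ F u := by simp only [hF_def]; positivity
    have : L u = F u * (1 / b - (x ^ 2 + u - c) / (2 * b ^ 3)) := by
      simp only [hL_def, hc_def]; ring_nf
    rw [this]
    have : G u = F u * (1 / Real.sqrt (x ^ 2 + u)) := by
      simp only [hG_def, hF_def]; ring
    rw [this]
    exact mul_le_mul_of_nonneg_left (by linarith [key]) hFu
  have hpt_lt : ∀ u : ℝ, 0 < u → u ≠ m + 1 → L u < G u := by
    intro u hu hne
    have ha := ha_pos u hu
    have haq := ha_sq u hu
    have hab : Real.sqrt (x ^ 2 + u) ≠ b := by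
      intro h
      apply hne
      have : x ^ 2 + u = c := by rw [← haq, h, hb2]
      simpa [hc_def] using this
    have key := tangent_lt (Real.sqrt (x ^ 2 + u)) b ha hb hab
    rw [haq, hb2] at key
    have hFu : 0 < F u := by simp only [hF_def]; positivity
    have h1 : L u = F u * (1 / b - (x ^ 2 + u - c) / (2 * b ^ 3)) := by
      simp only [hL_def, hc_def]; ring_nf
    have h2 : G u = F u * (1 / Real.sqrt (x ^ 2 + u)) := by
      simp only [hG_def, hF_def]; ring
    rw [h1, h2]
    exact mul_lt_mul_of_pos_left (by linarith [key]) hFu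
  -- strict integral inequality
  have hint_lt : Real.Gamma (m + 1) / b < ∫ u in Ioi (0:ℝ), G u := by
    rw [← hIL, ← sub_pos, ← integral_sub hG_int hL_int]
    rw [integral_pos_iff_support_of_nonneg_ae]
    · refine lt_of_lt_of_le ?_ (measure_mono ?_ (μ := volume.restrict (Ioi 0))
        (s := Ioi 0 \ {m + 1}))
      · rw [Measure.restrict_apply (measurableSet_Ioi.diff (measurableSet_singleton _))]
        rw [inter_eq_self_of_subset_left diff_subset]
        rw [measure_diff_null (measure_singleton _)]
        simp [Real.volume_Ioi]
      · intro u hu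
        exact (sub_pos.mpr (hpt_lt u hu.1 hu.2)).ne'
    · filter_upwards [ae_restrict_mem measurableSet_Ioi] with u hu
      exact sub_nonneg.mpr (hpt_le u hu)
    · exact hG_int.sub hL_int
  -- conclude
  have hb' : b = Real.sqrt (x ^ 2 + m + 1) := by
    rw [hb_def, hc_def]; ring_nf
  rw [← hb']
  have hGI : (∫ u in Set.Ioi (0:ℝ), u ^ m * Real.exp (-u) / Real.sqrt (x ^ 2 + u))
      = ∫ u in Ioi (0:ℝ), G u := rfl
  rw [V, hGI, one_div_mul_eq_div, lt_div_iff₀ hΓ]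
  calc 1 / b * Real.Gamma (m+1) = Real.Gamma (m + 1) / b := by ring
    _ < ∫ u in Ioi (0:ℝ), G u := hint_lt
end

section
/- For fixed m > -1 and x > 0, the function a ↦ a · V_m(a·x) is strictly increasing on (0, ∞). In particular a·V_m(a·x) > V_m(x) for a > 1. -/
open MeasureTheory Set Real

lemma V_integ (m : ℝ) (hm : -1 < m) {c : ℝ} (hc : 0 < c) :
    IntegrableOn (fun u : ℝ => u ^ m * Real.exp (-u) / Real.sqrt (c ^ 2 + u)) (Set.Ioi 0) := by
  have hG := Real.GammaIntegral_convergent (by linarith : (0:ℝ) < m + 1)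
  simp only [add_sub_cancel_right] at hG
  refine (hG.const_mul (1 / c)).mono' ?_ ?_
  · apply Measurable.aestronglyMeasurable
    fun_prop
  · filter_upwards [ae_restrict_mem measurableSet_Ioi] with u hu
    have hu0 : 0 < u := hu
    have hs : c ≤ Real.sqrt (c ^ 2 + u) := by
      have : Real.sqrt (c ^ 2) ≤ Real.sqrt (c ^ 2 + u) := Real.sqrt_le_sqrt (by linarith)
      rwa [Real.sqrt_sq hc.le] at this
    rw [Real.norm_eq_abs, abs_of_nonneg (by positivity)]
    calc u ^ m * Real.exp (-u) / Real.sqrt (c ^ 2 + u)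
        ≤ u ^ m * Real.exp (-u) / c := by
          apply div_le_div_of_nonneg_left (by positivity) hc hs
      _ = 1 / c * (Real.exp (-u) * u ^ m) := by ring

theorem stmt_6 (m x : ℝ) (hm : -1 < m) (hx : 0 < x) :
    StrictMonoOn (fun a => a * V m (a * x)) (Set.Ioi 0) ∧
    ∀ a : ℝ, 1 < a → V m x < a * V m (a * x) := by
  have hΓ : 0 < Real.Gamma (m + 1) := Real.Gamma_pos_of_pos (by linarith)
  have key : StrictMonoOn (fun a => a * V m (a * x)) (Set.Ioi 0) := by
    intro a ha b hb hab
    have ha0 : (0:ℝ) < a := ha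
    have hb0 : (0:ℝ) < b := hb
    have hax : 0 < a * x := mul_pos ha0 hx
    have hbx : 0 < b * x := mul_pos hb0 hx
    set Fa : ℝ → ℝ := fun u => a * (u ^ m * Real.exp (-u) / Real.sqrt ((a * x) ^ 2 + u)) with hFa
    set Fb : ℝ → ℝ := fun u => b * (u ^ m * Real.exp (-u) / Real.sqrt ((b * x) ^ 2 + u)) with hFb
    have hia : IntegrableOn Fa (Set.Ioi 0) := (V_integ m hm hax).const_mul a
    have hib : IntegrableOn Fb (Set.Ioi 0) := (V_integ m hm hbx).const_mul b
    have hpt : ∀ u ∈ Set.Ioi (0:ℝ), Fa u < Fb u := by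
      intro u hu
      have hu0 : (0:ℝ) < u := hu
      have hA : (0:ℝ) < (a * x) ^ 2 + u := by positivity
      have hB : (0:ℝ) < (b * x) ^ 2 + u := by positivity
      have hN : (0:ℝ) < u ^ m * Real.exp (-u) := by positivity
      have hdiv : a / Real.sqrt ((a * x) ^ 2 + u) < b / Real.sqrt ((b * x) ^ 2 + u) := by
        rw [div_lt_div_iff₀ (Real.sqrt_pos.mpr hA) (Real.sqrt_pos.mpr hB)]
        have h1 : a * Real.sqrt ((b * x) ^ 2 + u) = Real.sqrt (a ^ 2 * ((b * x) ^ 2 + u)) := by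
          rw [Real.sqrt_mul (by positivity), Real.sqrt_sq ha0.le]
        have h2 : b * Real.sqrt ((a * x) ^ 2 + u) = Real.sqrt (b ^ 2 * ((a * x) ^ 2 + u)) := by
          rw [Real.sqrt_mul (by positivity), Real.sqrt_sq hb0.le]
        rw [h1, h2]
        apply Real.sqrt_lt_sqrt (by positivity)
        have hsq : a ^ 2 < b ^ 2 := by nlinarith
        nlinarith [mul_lt_mul_of_pos_right hsq hu0]
      have : u ^ m * Real.exp (-u) * (a / Real.sqrt ((a * x) ^ 2 + u))
          < u ^ m * Real.exp (-u) * (b / Real.sqrt ((b * x) ^ 2 + u)) :=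
        mul_lt_mul_of_pos_left hdiv hN
      simp only [hFa, hFb]
      calc a * (u ^ m * Real.exp (-u) / Real.sqrt ((a * x) ^ 2 + u))
          = u ^ m * Real.exp (-u) * (a / Real.sqrt ((a * x) ^ 2 + u)) := by ring
        _ < u ^ m * Real.exp (-u) * (b / Real.sqrt ((b * x) ^ 2 + u)) := this
        _ = b * (u ^ m * Real.exp (-u) / Real.sqrt ((b * x) ^ 2 + u)) := by ring
    have hint : (∫ u in Set.Ioi (0:ℝ), Fa u) < ∫ u in Set.Ioi (0:ℝ), Fb u := by
      have hsub : 0 < ∫ u in Set.Ioi (0:ℝ), (Fb u - Fa u) := by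
        have hnn : 0 ≤ᶠ[ae (volume.restrict (Set.Ioi (0:ℝ)))] fun u => Fb u - Fa u := by
          filter_upwards [ae_restrict_mem measurableSet_Ioi] with u hu
          exact (sub_pos.mpr (hpt u hu)).le
        have hfi : Integrable (fun u => Fb u - Fa u) (volume.restrict (Set.Ioi (0:ℝ))) :=
          hib.sub hia
        rw [integral_pos_iff_support_of_nonneg_ae hnn hfi]
        have hss : Set.Ioi (0:ℝ) ⊆ Function.support fun u => Fb u - Fa u := fun u hu =>
          (sub_pos.mpr (hpt u hu)).ne'
        have h1 : (0:ENNReal) < (volume.restrict (Set.Ioi (0:ℝ))) (Set.Ioi (0:ℝ)) := by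
          rw [Measure.restrict_apply measurableSet_Ioi, Set.inter_self, Real.volume_Ioi]
          exact ENNReal.zero_lt_top
        exact lt_of_lt_of_le h1 (measure_mono hss)
      rw [integral_sub hib hia] at hsub
      linarith
    show a * V m (a * x) < b * V m (b * x)
    have ea : a * V m (a * x) = 1 / Real.Gamma (m + 1) * ∫ u in Set.Ioi (0:ℝ), Fa u := by
      simp only [V, hFa, MeasureTheory.integral_const_mul]; ring
    have eb : b * V m (b * x) = 1 / Real.Gamma (m + 1) * ∫ u in Set.Ioi (0:ℝ), Fb u := by
      simp only [V, hFb, MeasureTheory.integral_const_mul]; ring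
    rw [ea, eb]
    exact mul_lt_mul_of_pos_left hint (by positivity)
  refine ⟨key, fun a ha => ?_⟩
  have := key (Set.mem_Ioi.mpr one_pos) (Set.mem_Ioi.mpr (lt_trans one_pos ha)) ha
  simpa using this
end

section
/- The function V_0(x) = ∫_0^∞ e^{-u}/sqrt(x^2+u) du is convex on (0, ∞). -/
open MeasureTheory Real Set Filter

noncomputable def V₀ (x : ℝ) : ℝ :=
  ∫ u in Set.Ioi (0 : ℝ), Real.exp (-u) / Real.sqrt (x ^ 2 + u)

lemma integrableW (x : ℝ) (hx : 0 ≤ x) :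
    IntegrableOn (fun s : ℝ => 2 * Real.exp (-s ^ 2 - 2 * x * s)) (Set.Ioi 0) := by
  apply Integrable.mono' (((integrable_exp_neg_mul_sq one_pos).const_mul 2).integrableOn)
  · exact (Continuous.aestronglyMeasurable (by fun_prop))
  · filter_upwards [ae_restrict_mem measurableSet_Ioi] with s hs
    rw [Real.norm_eq_abs, abs_of_nonneg (by positivity)]
    have hs0 : (0:ℝ) < s := hs
    have harg : -s ^ 2 - 2 * x * s ≤ -1 * s ^ 2 := by nlinarith
    have := Real.exp_le_exp.mpr harg
    linarith

set_option maxHeartbeats 1000000 in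
lemma V0_eq (x : ℝ) (hx : 0 < x) :
    V₀ x = ∫ s in Set.Ioi (0 : ℝ), 2 * Real.exp (-s ^ 2 - 2 * x * s) := by
  set g : ℝ → ℝ := fun u => Real.exp (-u) / Real.sqrt (x ^ 2 + u) with hg
  set f : ℝ → ℝ := fun s => s ^ 2 + 2 * x * s with hf
  have himIci : f '' Set.Ici 0 ⊆ Set.Ici 0 := by
    rintro _ ⟨s, hs, rfl⟩
    have : (0:ℝ) ≤ s := hs
    simp only [hf, Set.mem_Ici]
    nlinarith
  have himIoi : f '' Set.Ioi 0 ⊆ Set.Ici 0 := by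
    refine Subset.trans ?_ himIci
    exact Set.image_mono Ioi_subset_Ici_self
  have hgcont : ContinuousOn g (Set.Ici 0) := by
    apply ContinuousOn.div
    · fun_prop
    · fun_prop
    · intro u hu
      have hu0 : (0:ℝ) ≤ u := hu
      have : 0 < x ^ 2 + u := by nlinarith
      exact (Real.sqrt_pos.mpr this).ne'
  have hgint : IntegrableOn g (Set.Ici 0) := by
    apply Integrable.mono'
      (g := fun u => (1 / x) * Real.exp (-1 * u))
      (Iff.mpr integrableOn_Ici_iff_integrableOn_Ioi
        ((exp_neg_integrableOn_Ioi 0 one_pos).const_mul (1 / x)))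
    · exact hgcont.aestronglyMeasurable measurableSet_Ici
    · filter_upwards [ae_restrict_mem measurableSet_Ici] with u hu
      have hu0 : (0:ℝ) ≤ u := hu
      have hxx : x ≤ Real.sqrt (x ^ 2 + u) := by
        rw [show x ^ 2 + u = x ^ 2 + u from rfl]
        have : x = Real.sqrt (x ^ 2) := by rw [Real.sqrt_sq hx.le]
        rw [this]
        exact Real.sqrt_le_sqrt (by nlinarith)
      have hsq : 0 < Real.sqrt (x ^ 2 + u) := lt_of_lt_of_le hx hxx
      rw [Real.norm_eq_abs, abs_of_nonneg (by positivity)]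
      rw [hg]
      simp only [neg_one_mul, one_div]
      rw [div_le_iff₀ hsq, mul_comm x⁻¹ _, mul_assoc]
      nth_rewrite 1 [← mul_one (Real.exp (-u))]
      apply mul_le_mul_of_nonneg_left _ (Real.exp_pos _).le
      rw [← mul_le_mul_iff_right₀ hx, mul_one, ← mul_assoc, mul_inv_cancel₀ hx.ne', one_mul]
      exact hxx
  have hEq : ∀ s ∈ Set.Ici (0:ℝ), (g ∘ f) s * (2 * s + 2 * x) =
      2 * Real.exp (-s ^ 2 - 2 * x * s) := by
    intro s hs
    have hs0 : (0:ℝ) ≤ s := hs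
    have hxs : 0 < x + s := by linarith
    have hsqrt : Real.sqrt (x ^ 2 + (s ^ 2 + 2 * x * s)) = x + s := by
      rw [show x ^ 2 + (s ^ 2 + 2 * x * s) = (x + s) ^ 2 by ring, Real.sqrt_sq hxs.le]
    simp only [Function.comp, hg, hf, hsqrt]
    rw [show -(s ^ 2 + 2 * x * s) = -s ^ 2 - 2 * x * s by ring]
    field_simp
    ring
  have hg2 : IntegrableOn (fun s => (g ∘ f) s * (2 * s + 2 * x)) (Set.Ici 0) := by
    rw [integrableOn_Ici_iff_integrableOn_Ioi]
    exact (integrableW x hx.le).congr_fun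
      (fun s hs => by simpa using (hEq s (Ioi_subset_Ici_self hs)).symm) measurableSet_Ioi
  have hfc : ContinuousOn f (Set.Ici 0) := by
    rw [hf]; fun_prop
  have hftop : Tendsto f atTop atTop := by
    rw [hf]
    apply tendsto_atTop_mono' atTop ?_ tendsto_id
    filter_upwards [eventually_ge_atTop 1] with s hs
    simp only [id_eq]
    nlinarith
  have hderiv : ∀ s ∈ Set.Ioi (0:ℝ), HasDerivWithinAt f (2 * s + 2 * x) (Set.Ioi s) s := by
    intro s _
    have h1 : HasDerivAt f (2 * s + 2 * x) s := by
      rw [hf]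
      simpa [Pi.add_def] using (hasDerivAt_pow 2 s).add (((hasDerivAt_id s)).const_mul (2 * x))
    exact h1.hasDerivWithinAt
  have key := MeasureTheory.integral_comp_mul_deriv_Ioi
      (f := f) (f' := fun s => 2 * s + 2 * x) (g := g) (a := 0)
      hfc hftop hderiv
      (hgcont.mono himIoi)
      (hgint.mono_set himIci)
      hg2
  have hf0 : f 0 = 0 := by simp [hf]
  rw [hf0] at key
  rw [V₀, ← key]
  exact setIntegral_congr_fun measurableSet_Ioi
    (fun s hs => by simpa using hEq s (Ioi_subset_Ici_self hs))

theorem stmt_7 : ConvexOn ℝ (Set.Ioi (0 : ℝ)) V₀ := by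
  refine ⟨convex_Ioi 0, fun x hx y hy a b ha hb hab => ?_⟩
  have hx0 : (0:ℝ) < x := hx
  have hy0 : (0:ℝ) < y := hy
  have hz : 0 < a * x + b * y := by
    rcases ha.lt_or_eq with h | h
    · exact add_pos_of_pos_of_nonneg (mul_pos h hx0) (mul_nonneg hb hy0.le)
    · have hb1 : b = 1 := by linarith
      rw [← h, hb1]; simpa using hy0
  simp only [smul_eq_mul]
  rw [V0_eq x hx0, V0_eq y hy0, V0_eq _ hz]
  have hix := integrableW x hx0.le
  have hiy := integrableW y hy0.le
  have hRHS : a * (∫ s in Set.Ioi (0:ℝ), 2 * Real.exp (-s ^ 2 - 2 * x * s))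
      + b * (∫ s in Set.Ioi (0:ℝ), 2 * Real.exp (-s ^ 2 - 2 * y * s))
      = ∫ s in Set.Ioi (0:ℝ), (a * (2 * Real.exp (-s ^ 2 - 2 * x * s))
        + b * (2 * Real.exp (-s ^ 2 - 2 * y * s))) := by
    rw [integral_add (hix.const_mul a) (hiy.const_mul b), integral_const_mul a, integral_const_mul b]
  rw [hRHS]
  apply setIntegral_mono_on (integrableW _ hz.le)
    ((hix.const_mul a).add (hiy.const_mul b)) measurableSet_Ioi
  intro s hs
  have harg : -s ^ 2 - 2 * (a * x + b * y) * s
      = a * (-s ^ 2 - 2 * x * s) + b * (-s ^ 2 - 2 * y * s) := by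
    have : a + b = 1 := hab
    nlinarith [this]
  rw [harg]
  have := convexOn_exp.2 (Set.mem_univ (-s ^ 2 - 2 * x * s))
    (Set.mem_univ (-s ^ 2 - 2 * y * s)) ha hb hab
  simp only [smul_eq_mul] at this
  simp only [Pi.add_apply]
  linarith
end

section
/- For p > 1 and integer m ≥ 1, V_{m+1}^p(x) < V_m^p(x) for all x > 0; for 0 < p < 1, V_{m+1}^p(x) > V_m^p(x). -/
open MeasureTheory Set

noncomputable def Vp (p m x : ℝ) : ℝ :=
  (1 / Real.Gamma (m + 1)) *
    ∫ u in Set.Ioi (0 : ℝ), u ^ m * Real.exp (-u) / (x ^ p + u) ^ ((p - 1) / p)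

/-- Integrability of `u^k * exp(-u)` on `(0, ∞)`. -/
lemma J_int (k : ℕ) : IntegrableOn (fun u : ℝ => u ^ k * Real.exp (-u)) (Set.Ioi 0) := by
  have h := Real.GammaIntegral_convergent (s := (k : ℝ) + 1) (by positivity)
  refine h.congr_fun (fun u hu => ?_) measurableSet_Ioi
  have : ((k : ℝ) + 1) - 1 = (k : ℝ) := by ring
  rw [this]; beta_reduce; rw [Real.rpow_natCast, mul_comm]

/-- Value of the Gamma-type integral. -/
lemma J_eq (k : ℕ) : (∫ u in Set.Ioi (0:ℝ), u ^ k * Real.exp (-u)) = (Nat.factorial k : ℝ) := by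
  rw [← Real.Gamma_nat_eq_factorial, Real.Gamma_eq_integral (by positivity)]
  refine setIntegral_congr_fun measurableSet_Ioi (fun u hu => ?_)
  have : ((k : ℝ) + 1) - 1 = (k : ℝ) := by ring
  rw [this, Real.rpow_natCast, mul_comm]

/-- Integrability of `u^k * (t+u)^n * exp(-u)` on `(0, ∞)`. -/
lemma intPoly (t : ℝ) : ∀ n k : ℕ,
    IntegrableOn (fun u : ℝ => u ^ k * (t + u) ^ n * Real.exp (-u)) (Set.Ioi 0) := by
  intro n
  induction n with
  | zero =>
    intro k
    refine (J_int k).congr_fun (fun u _ => ?_) measurableSet_Ioi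
    simp
  | succ n ih =>
    intro k
    have h : IntegrableOn (fun u : ℝ =>
        t * (u ^ k * (t + u) ^ n * Real.exp (-u))
          + u ^ (k + 1) * (t + u) ^ n * Real.exp (-u)) (Set.Ioi 0) :=
      ((ih k).const_mul t).add (ih (k + 1))
    refine h.congr_fun (fun u _ => ?_) measurableSet_Ioi
    ring

/-- Integrability of `u^k * exp(-u) * (s+u)^b` on `(0, ∞)` for `s > 0` and any real `b`. -/
lemma int_g (s b : ℝ) (hs : 0 < s) (k : ℕ) :
    IntegrableOn (fun u : ℝ => u ^ k * Real.exp (-u) * (s + u) ^ b) (Set.Ioi 0) := by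
  have hmeas : AEStronglyMeasurable (fun u : ℝ => u ^ k * Real.exp (-u) * (s + u) ^ b)
      (volume.restrict (Set.Ioi 0)) := by
    refine ContinuousOn.aestronglyMeasurable ?_ measurableSet_Ioi
    refine (ContinuousOn.mul (by fun_prop) ?_)
    intro u hu
    have hu0 : (0:ℝ) < u := hu
    have h1 : ContinuousAt (fun v : ℝ => (s + v) ^ b) u :=
      (Real.continuousAt_rpow_const (s + u) b (Or.inl (by positivity))).comp
        ((continuous_const.add continuous_id).continuousAt)
    exact h1.continuousWithinAt
  rcases le_or_gt b 0 with hb | hb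
  · refine Integrable.mono ((J_int k).const_mul (s ^ b)) hmeas ?_
    refine (ae_restrict_iff' measurableSet_Ioi).2 (ae_of_all _ (fun u hu => ?_))
    have hu0 : (0:ℝ) < u := hu
    have h1 : (s + u) ^ b ≤ s ^ b :=
      Real.rpow_le_rpow_of_nonpos hs (by linarith) hb
    have h2 : (0:ℝ) ≤ (s + u) ^ b := Real.rpow_nonneg (by linarith) b
    rw [Real.norm_eq_abs, Real.norm_eq_abs, abs_of_nonneg (by positivity),
      abs_of_nonneg (by positivity)]
    calc u ^ k * Real.exp (-u) * (s + u) ^ b ≤ u ^ k * Real.exp (-u) * s ^ b := by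
          apply mul_le_mul_of_nonneg_left h1 (by positivity)
      _ = s ^ b * (u ^ k * Real.exp (-u)) := by ring
  · set n := ⌈b⌉₊ with hn
    refine Integrable.mono (intPoly (1 + s) n k) hmeas ?_
    refine (ae_restrict_iff' measurableSet_Ioi).2 (ae_of_all _ (fun u hu => ?_))
    have hu0 : (0:ℝ) < u := hu
    have h1 : (s + u) ^ b ≤ (1 + s + u) ^ b :=
      Real.rpow_le_rpow (by linarith) (by linarith) hb.le
    have h2 : (1 + s + u) ^ b ≤ (1 + s + u) ^ (n : ℝ) :=
      Real.rpow_le_rpow_of_exponent_le (by linarith) (Nat.le_ceil b)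
    have h3 : (1 + s + u) ^ (n : ℝ) = (1 + s + u) ^ n := Real.rpow_natCast _ n
    rw [Real.norm_eq_abs, Real.norm_eq_abs, abs_of_nonneg
        (by have := Real.rpow_nonneg (show (0:ℝ) ≤ s + u by linarith) b; positivity),
      abs_of_nonneg (by positivity)]
    calc u ^ k * Real.exp (-u) * (s + u) ^ b
        ≤ u ^ k * Real.exp (-u) * (1 + s + u) ^ n := by
          apply mul_le_mul_of_nonneg_left (by linarith) (by positivity)
      _ = u ^ k * (1 + s + u) ^ n * Real.exp (-u) := by ring

/-- Key comparison: for a strictly decreasing weight `g`, the Gamma-mixture integrals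
strictly decrease. -/
lemma key (m : ℕ) (g : ℝ → ℝ) (hg : StrictAntiOn g (Set.Ioi 0))
    (hint : ∀ k : ℕ, IntegrableOn (fun u : ℝ => u ^ k * Real.exp (-u) * g u) (Set.Ioi 0)) :
    (∫ u in Set.Ioi (0:ℝ), u ^ (m + 1) * Real.exp (-u) * g u)
      < ((m : ℝ) + 1) * ∫ u in Set.Ioi (0:ℝ), u ^ m * Real.exp (-u) * g u := by
  set c : ℝ := (m : ℝ) + 1 with hc
  have hc0 : (0:ℝ) < c := by positivity
  have hcmem : c ∈ Set.Ioi (0:ℝ) := hc0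
  set h : ℝ → ℝ := fun u => u ^ m * Real.exp (-u) * ((c - u) * (g u - g c)) with hh
  have heq : ∀ u : ℝ, h u =
      c * (u ^ m * Real.exp (-u) * g u) - u ^ (m + 1) * Real.exp (-u) * g u
        - (c * g c) * (u ^ m * Real.exp (-u)) + g c * (u ^ (m + 1) * Real.exp (-u)) := by
    intro u; simp only [hh]; ring
  have i1 : IntegrableOn (fun u : ℝ => c * (u ^ m * Real.exp (-u) * g u)) (Set.Ioi 0) :=
    (hint m).const_mul c
  have i2 : IntegrableOn (fun u : ℝ => u ^ (m + 1) * Real.exp (-u) * g u) (Set.Ioi 0) :=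
    hint (m + 1)
  have i3 : IntegrableOn (fun u : ℝ => (c * g c) * (u ^ m * Real.exp (-u))) (Set.Ioi 0) :=
    (J_int m).const_mul _
  have i4 : IntegrableOn (fun u : ℝ => g c * (u ^ (m + 1) * Real.exp (-u))) (Set.Ioi 0) :=
    (J_int (m + 1)).const_mul _
  have i12 : IntegrableOn (fun u : ℝ => c * (u ^ m * Real.exp (-u) * g u)
      - u ^ (m + 1) * Real.exp (-u) * g u) (Set.Ioi 0) := i1.sub i2
  have i123 : IntegrableOn (fun u : ℝ => c * (u ^ m * Real.exp (-u) * g u)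
      - u ^ (m + 1) * Real.exp (-u) * g u
      - (c * g c) * (u ^ m * Real.exp (-u))) (Set.Ioi 0) := i12.sub i3
  have i1234 : IntegrableOn (fun u : ℝ => c * (u ^ m * Real.exp (-u) * g u)
      - u ^ (m + 1) * Real.exp (-u) * g u
      - (c * g c) * (u ^ m * Real.exp (-u))
      + g c * (u ^ (m + 1) * Real.exp (-u))) (Set.Ioi 0) := i123.add i4
  have hInt : IntegrableOn h (Set.Ioi 0) :=
    i1234.congr_fun (fun u _ => (heq u).symm) measurableSet_Ioi
  have hIval : (∫ u in Set.Ioi (0:ℝ), h u)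
      = c * (∫ u in Set.Ioi (0:ℝ), u ^ m * Real.exp (-u) * g u)
        - ∫ u in Set.Ioi (0:ℝ), u ^ (m + 1) * Real.exp (-u) * g u := by
    rw [setIntegral_congr_fun measurableSet_Ioi (fun u (_ : u ∈ Set.Ioi (0:ℝ)) => heq u)]
    rw [integral_add i123 i4, integral_sub i12 i3, integral_sub i1 i2,
      integral_const_mul, integral_const_mul, integral_const_mul, J_eq, J_eq]
    have hfac : (Nat.factorial (m + 1) : ℝ) = c * (Nat.factorial m : ℝ) := by
      rw [Nat.factorial_succ]; push_cast [hc]; ring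
    rw [hfac]; ring
  have hpos : 0 < ∫ u in Set.Ioi (0:ℝ), h u := by
    have hnn : 0 ≤ᵐ[volume.restrict (Set.Ioi 0)] h := by
      refine (ae_restrict_iff' measurableSet_Ioi).2 (ae_of_all _ (fun u hu => ?_))
      have hu0 : (0:ℝ) < u := hu
      have hfac : 0 ≤ (c - u) * (g u - g c) := by
        rcases lt_trichotomy u c with hlt | heqc | hgt
        · have : g c < g u := hg hu hcmem hlt
          nlinarith
        · simp [heqc]
        · have : g u < g c := hg hcmem hu hgt
          nlinarith
      have : (0:ℝ) ≤ u ^ m * Real.exp (-u) := by positivity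
      exact mul_nonneg this hfac
    rw [setIntegral_pos_iff_support_of_nonneg_ae hnn hInt]
    refine lt_of_lt_of_le ?_ (measure_mono (show Set.Ioi c ⊆ Function.support h ∩ Set.Ioi 0
      from ?_))
    · rw [Real.volume_Ioi]; exact ENNReal.zero_lt_top
    · intro u hu
      have huc : c < u := hu
      have hu0 : (0:ℝ) < u := lt_trans hc0 huc
      constructor
      · have h1 : g u < g c := hg hcmem (Set.mem_Ioi.2 hu0) huc
        have : 0 < h u := by
          simp only [hh]
          have : 0 < (c - u) * (g u - g c) := by nlinarith
          positivity
        exact ne_of_gt this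
      · exact hu0
  linarith [hIval ▸ hpos]

lemma Vp_eq (p x : ℝ) (k : ℕ) :
    Vp p k x = (1 / (Nat.factorial k : ℝ)) *
      ∫ u in Set.Ioi (0:ℝ), u ^ k * Real.exp (-u) * ((x ^ p + u) ^ ((p - 1) / p))⁻¹ := by
  unfold Vp
  rw [Real.Gamma_nat_eq_factorial]
  congr 1
  refine setIntegral_congr_fun measurableSet_Ioi (fun u hu => ?_)
  rw [Real.rpow_natCast, div_eq_mul_inv]

theorem stmt_8 (m : ℕ) (hm : 1 ≤ m) (p x : ℝ) (hx : 0 < x) :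
    (1 < p → Vp p (m + 1) x < Vp p m x) ∧
    (0 < p → p < 1 → Vp p m x < Vp p (m + 1) x) := by
  have hxp : 0 < x ^ p := Real.rpow_pos_of_pos hx p
  set s : ℝ := x ^ p with hs
  set a : ℝ := (p - 1) / p with ha
  set g : ℝ → ℝ := fun u => ((s + u) ^ a)⁻¹ with hg
  have hint : ∀ k : ℕ, IntegrableOn (fun u : ℝ => u ^ k * Real.exp (-u) * g u)
      (Set.Ioi 0) := by
    intro k
    refine (int_g s (-a) hxp k).congr_fun (fun u hu => ?_) measurableSet_Ioi
    have hu0 : (0:ℝ) < u := hu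
    rw [hg]
    simp only []
    rw [Real.rpow_neg (by linarith)]
  have hVm : Vp p (m : ℝ) x = (1 / (Nat.factorial m : ℝ)) *
      ∫ u in Set.Ioi (0:ℝ), u ^ m * Real.exp (-u) * g u := Vp_eq p x m
  have hVm1 : Vp p ((m : ℝ) + 1) x = (1 / (Nat.factorial (m + 1) : ℝ)) *
      ∫ u in Set.Ioi (0:ℝ), u ^ (m + 1) * Real.exp (-u) * g u := by
    have : ((m : ℝ) + 1) = ((m + 1 : ℕ) : ℝ) := by push_cast; ring
    rw [this]; exact Vp_eq p x (m + 1)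
  set Im : ℝ := ∫ u in Set.Ioi (0:ℝ), u ^ m * Real.exp (-u) * g u with hIm
  set Im1 : ℝ := ∫ u in Set.Ioi (0:ℝ), u ^ (m + 1) * Real.exp (-u) * g u with hIm1
  have hfacpos : (0:ℝ) < (Nat.factorial m : ℝ) := by exact_mod_cast Nat.factorial_pos m
  have hconv : ∀ (h1 : Im1 < ((m:ℝ) + 1) * Im), Vp p ((m:ℝ)+1) x < Vp p (m:ℝ) x := by
    intro h1
    rw [hVm, hVm1, one_div_mul_eq_div, one_div_mul_eq_div,
      div_lt_div_iff₀ (by exact_mod_cast Nat.factorial_pos (m+1)) hfacpos]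
    have hfs : (Nat.factorial (m + 1) : ℝ) = ((m:ℝ) + 1) * (Nat.factorial m : ℝ) := by
      rw [Nat.factorial_succ]; push_cast; ring
    rw [hfs]
    nlinarith
  have hconv' : ∀ (h1 : ((m:ℝ) + 1) * Im < Im1), Vp p (m:ℝ) x < Vp p ((m:ℝ)+1) x := by
    intro h1
    rw [hVm, hVm1, one_div_mul_eq_div, one_div_mul_eq_div,
      div_lt_div_iff₀ hfacpos (by exact_mod_cast Nat.factorial_pos (m+1))]
    have hfs : (Nat.factorial (m + 1) : ℝ) = ((m:ℝ) + 1) * (Nat.factorial m : ℝ) := by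
      rw [Nat.factorial_succ]; push_cast; ring
    rw [hfs]
    nlinarith
  constructor
  · intro hp
    have ha0 : 0 < a := by
      rw [ha]; apply div_pos <;> linarith
    have hanti : StrictAntiOn g (Set.Ioi 0) := by
      intro u hu v hv huv
      have hu0 : (0:ℝ) < u := hu
      have hv0 : (0:ℝ) < v := hv
      have h1 : (s + u) ^ a < (s + v) ^ a :=
        Real.rpow_lt_rpow (by linarith) (by linarith) ha0
      have h2 : 0 < (s + u) ^ a := Real.rpow_pos_of_pos (by linarith) a
      exact inv_strictAnti₀ h2 h1
    exact hconv (key m g hanti hint)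
  · intro hp0 hp1
    have ha0 : a < 0 := by
      rw [ha]; apply div_neg_of_neg_of_pos <;> linarith
    have hmono : StrictAntiOn (fun u => -g u) (Set.Ioi 0) := by
      intro u hu v hv huv
      have hu0 : (0:ℝ) < u := hu
      have hv0 : (0:ℝ) < v := hv
      have h1 : (s + v) ^ a < (s + u) ^ a :=
        Real.rpow_lt_rpow_of_neg (by linarith) (by linarith) ha0
      have h2 : 0 < (s + v) ^ a := Real.rpow_pos_of_pos (by linarith) a
      have : g u < g v := inv_strictAnti₀ h2 h1
      simpa using this
    have hint' : ∀ k : ℕ, IntegrableOn (fun u : ℝ => u ^ k * Real.exp (-u) * (-g u))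
        (Set.Ioi 0) := by
      intro k
      have hneg : IntegrableOn (fun u : ℝ => -(u ^ k * Real.exp (-u) * g u))
          (Set.Ioi 0) := (hint k).neg
      refine hneg.congr_fun (fun u _ => ?_) measurableSet_Ioi
      ring
    have hkey := key m (fun u => -g u) hmono hint'
    have e1 : (∫ u in Set.Ioi (0:ℝ), u ^ (m + 1) * Real.exp (-u) * (-g u)) = -Im1 := by
      rw [hIm1, ← integral_neg]
      refine setIntegral_congr_fun measurableSet_Ioi (fun u _ => ?_)
      ring
    have e2 : (∫ u in Set.Ioi (0:ℝ), u ^ m * Real.exp (-u) * (-g u)) = -Im := by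
      rw [hIm, ← integral_neg]
      refine setIntegral_congr_fun measurableSet_Ioi (fun u _ => ?_)
      ring
    rw [e1, e2] at hkey
    exact hconv' (by linarith)
end

section
/- For fixed m > -1 and x ≥ 1, the function p ↦ V_m^p(x) is nonincreasing in p on (0, ∞). -/
open MeasureTheory Real Set

-- key pointwise inequality
lemma key_ineq {x u p q : ℝ} (hx : 1 ≤ x) (hu : 0 < u) (hp : 0 < p) (hpq : p ≤ q) :
    (x ^ p + u) ^ ((p - 1) / p) ≤ (x ^ q + u) ^ ((q - 1) / q) := by
  have hq : 0 < q := lt_of_lt_of_le hp hpq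
  have hx0 : (0:ℝ) < x := lt_of_lt_of_le one_pos hx
  have hxp : (1:ℝ) ≤ x ^ p := Real.one_le_rpow hx hp.le
  have hxq : (1:ℝ) ≤ x ^ q := Real.one_le_rpow hx hq.le
  have hap : (0:ℝ) < x ^ p + u := by linarith
  have haq : (0:ℝ) < x ^ q + u := by linarith
  have hlx : 0 ≤ Real.log x := Real.log_nonneg hx
  set Lp := Real.log (x ^ p + u) with hLp
  set Lq := Real.log (x ^ q + u) with hLq
  have h1 : p * Real.log x ≤ Lp := by
    rw [← Real.log_rpow hx0]
    exact Real.log_le_log (Real.rpow_pos_of_pos hx0 p) (by linarith)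
  have h2 : Lp ≤ Lq := by
    apply Real.log_le_log hap
    have : x ^ p ≤ x ^ q := Real.rpow_le_rpow_of_exponent_le hx hpq
    linarith
  have h3 : Lq ≤ Lp + (q - p) * Real.log x := by
    have hxqp : (1:ℝ) ≤ x ^ (q - p) := Real.one_le_rpow hx (by linarith)
    have : x ^ q + u ≤ x ^ (q - p) * (x ^ p + u) := by
      have hxx : x ^ (q - p) * x ^ p = x ^ q := by
        rw [← Real.rpow_add hx0]; ring_nf
      have : u ≤ x ^ (q - p) * u := le_mul_of_one_le_left hu.le hxqp
      nlinarith
    calc Lq ≤ Real.log (x ^ (q - p) * (x ^ p + u)) := Real.log_le_log haq this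
      _ = (q - p) * Real.log x + Lp := by
          rw [Real.log_mul (by positivity) (ne_of_gt hap), Real.log_rpow hx0]
      _ = Lp + (q - p) * Real.log x := by ring
  have hLp0 : 0 ≤ Lp := le_trans (by positivity) h1
  have key : (p - 1) / p * Lp ≤ (q - 1) / q * Lq := by
    rw [div_mul_eq_mul_div, div_mul_eq_mul_div, div_le_div_iff₀ hp hq]
    -- goal : (p-1) * Lp * q ≤ (q-1) * Lq * p
    rcases le_or_gt 1 q with h | h
    · nlinarith [mul_nonneg (sub_nonneg.mpr hpq) hLp0, mul_nonneg (sub_nonneg.mpr h) (sub_nonneg.mpr h2)]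
    · have hA : 0 ≤ (1 - q) * ((q - p) * Real.log x - (Lq - Lp)) :=
        mul_nonneg (by linarith) (by linarith)
      have hB : 0 ≤ (q - p) * (Lp - p * Real.log x) :=
        mul_nonneg (by linarith) (by linarith)
      nlinarith [mul_nonneg hp.le hA, hB,
        mul_nonneg (mul_nonneg (mul_nonneg hp.le hq.le) (sub_nonneg.mpr hpq)) hlx]
  calc (x ^ p + u) ^ ((p - 1) / p) = Real.exp ((p - 1) / p * Lp) := by
        rw [Real.rpow_def_of_pos hap, hLp]; ring_nf
    _ ≤ Real.exp ((q - 1) / q * Lq) := Real.exp_le_exp.mpr key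
    _ = (x ^ q + u) ^ ((q - 1) / q) := by rw [Real.rpow_def_of_pos haq, hLq]; ring_nf

-- integrability
lemma integ {m c a : ℝ} (hm : -1 < m) (ha : 1 ≤ a) :
    IntegrableOn (fun u => u ^ m * Real.exp (-u) / (a + u) ^ c) (Set.Ioi (0:ℝ)) := by
  set d := |c| with hd
  have hd0 : 0 ≤ d := abs_nonneg c
  have ha0 : (0:ℝ) < a := lt_of_lt_of_le one_pos ha
  have hg1 : IntegrableOn (fun u : ℝ => Real.exp (-u) * u ^ (m + 1 - 1)) (Set.Ioi 0) :=
    Real.GammaIntegral_convergent (by linarith)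
  have hg2 : IntegrableOn (fun u : ℝ => Real.exp (-u) * u ^ (m + d + 1 - 1)) (Set.Ioi 0) :=
    Real.GammaIntegral_convergent (by linarith)
  have hG : IntegrableOn (fun u : ℝ =>
      (2:ℝ) ^ d * a ^ d * (Real.exp (-u) * u ^ m) + (2:ℝ) ^ d * (Real.exp (-u) * u ^ (m + d)))
      (Set.Ioi 0) := by
    apply Integrable.add
    · exact (hg1.congr_fun (fun u hu => by ring_nf) measurableSet_Ioi).const_mul _
    · exact (hg2.congr_fun (fun u hu => by ring_nf) measurableSet_Ioi).const_mul _
  refine Integrable.mono' hG ?_ ?_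
  · apply Measurable.aestronglyMeasurable
    fun_prop
  · filter_upwards [ae_restrict_mem measurableSet_Ioi] with u hu
    have hu0 : (0:ℝ) < u := hu
    have hau : (0:ℝ) < a + u := by linarith
    have hfnn : 0 ≤ u ^ m * Real.exp (-u) / (a + u) ^ c := by positivity
    rw [Real.norm_eq_abs, abs_of_nonneg hfnn]
    have h1 : u ^ m * Real.exp (-u) / (a + u) ^ c
        = u ^ m * Real.exp (-u) * (a + u) ^ (-c) := by
      rw [Real.rpow_neg hau.le, div_eq_mul_inv]
    rw [h1]
    have h2 : (a + u) ^ (-c) ≤ (a + u) ^ d := by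
      apply Real.rpow_le_rpow_of_exponent_le (by linarith) (neg_le_abs c)
    have h3 : (a + u) ^ d ≤ (2:ℝ) ^ d * (a ^ d + u ^ d) := by
      have hmax : a + u ≤ 2 * max a u := by
        rcases max_cases a u with ⟨h, h'⟩ | ⟨h, h'⟩ <;> rw [h] <;> linarith
      calc (a + u) ^ d ≤ (2 * max a u) ^ d :=
            Real.rpow_le_rpow (by linarith) hmax hd0
        _ = 2 ^ d * (max a u) ^ d := Real.mul_rpow (by norm_num) (le_max_of_le_left ha0.le)
        _ ≤ 2 ^ d * (a ^ d + u ^ d) := by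
            apply mul_le_mul_of_nonneg_left _ (by positivity)
            rcases max_cases a u with ⟨h, h'⟩ | ⟨h, h'⟩ <;> rw [h]
            · nlinarith [Real.rpow_nonneg hu0.le d]
            · nlinarith [Real.rpow_nonneg ha0.le d]
    have hnn : 0 ≤ u ^ m * Real.exp (-u) := by positivity
    calc u ^ m * Real.exp (-u) * (a + u) ^ (-c)
        ≤ u ^ m * Real.exp (-u) * ((2:ℝ) ^ d * (a ^ d + u ^ d)) := by
          exact mul_le_mul_of_nonneg_left (le_trans h2 h3) hnn
      _ = (2:ℝ) ^ d * a ^ d * (Real.exp (-u) * u ^ m) + (2:ℝ) ^ d * (Real.exp (-u) * u ^ (m + d)) := by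
          rw [Real.rpow_add hu0]; ring

theorem stmt_9 (m x : ℝ) (hm : -1 < m) (hx : 1 ≤ x) :
    ∀ p q : ℝ, 0 < p → p ≤ q → Vp q m x ≤ Vp p m x := by
  intro p q hp hpq
  have hq : 0 < q := lt_of_lt_of_le hp hpq
  have hx0 : (0:ℝ) < x := lt_of_lt_of_le one_pos hx
  have hxp : (1:ℝ) ≤ x ^ p := Real.one_le_rpow hx hp.le
  have hxq : (1:ℝ) ≤ x ^ q := Real.one_le_rpow hx hq.le
  unfold Vp
  have hΓ : 0 < Real.Gamma (m + 1) := Real.Gamma_pos_of_pos (by linarith)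
  apply mul_le_mul_of_nonneg_left _ (by positivity)
  apply setIntegral_mono_on (integ hm hxq) (integ hm hxp) measurableSet_Ioi
  intro u hu
  have hu0 : (0:ℝ) < u := hu
  have hle := key_ineq hx hu0 hp hpq (x := x)
  have haq : (0:ℝ) < x ^ q + u := by linarith
  have hap : (0:ℝ) < x ^ p + u := by linarith
  gcongr
end

section
/- For fixed 0 < x < 1 and m > 0, lim_{p → ∞} V_m^p(x) = 1/m. -/
open MeasureTheory Filter Set Real

theorem stmt_10 (m x : ℝ) (hm : 0 < m) (hx0 : 0 < x) (hx1 : x < 1) :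
    Filter.Tendsto (fun p => Vp p m x) Filter.atTop (nhds (1 / m)) := by
  set F : ℝ → ℝ → ℝ := fun p u => u ^ m * Real.exp (-u) / (x ^ p + u) ^ ((p - 1) / p)
  set g : ℝ → ℝ := fun u => Real.exp (-u) * u ^ (m - 1) + Real.exp (-u) * u ^ (m - 1/2)
  have hexp : Tendsto (fun p : ℝ => (p - 1) / p) atTop (nhds 1) := by
    have h1 : Tendsto (fun p : ℝ => 1 - p⁻¹) atTop (nhds 1) := by
      simpa using (tendsto_const_nhds (x := (1:ℝ))).sub tendsto_inv_atTop_zero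
    refine h1.congr' ?_
    filter_upwards [eventually_gt_atTop (0:ℝ)] with p hp
    field_simp
  -- pointwise limit
  have hlim : ∀ u ∈ Ioi (0:ℝ), Tendsto (fun p => F p u) atTop
      (nhds (Real.exp (-u) * u ^ (m - 1))) := by
    intro u hu
    have hu0 : (0:ℝ) < u := hu
    have hbase : Tendsto (fun p : ℝ => x ^ p + u) atTop (nhds u) := by
      simpa using (tendsto_rpow_atTop_of_base_lt_one x (by linarith) hx1).add
        (tendsto_const_nhds (x := u))
    have hden : Tendsto (fun p : ℝ => (x ^ p + u) ^ ((p - 1) / p)) atTop (nhds u) := by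
      have := hbase.rpow hexp (Or.inl hu0.ne')
      simpa using this
    have : Tendsto (fun p => F p u) atTop (nhds (u ^ m * Real.exp (-u) / u)) :=
      (tendsto_const_nhds (x := u ^ m * Real.exp (-u))).div hden hu0.ne'
    convert this using 2
    rw [Real.rpow_sub_one hu0.ne']
    ring
  -- bound
  have hbound : ∀ p : ℝ, 2 ≤ p → ∀ u ∈ Ioi (0:ℝ), ‖F p u‖ ≤ g u := by
    intro p hp u hu
    have hu0 : (0:ℝ) < u := hu
    set e := (p - 1) / p with he
    have hp0 : (0:ℝ) < p := by linarith
    have he0 : 0 ≤ e := div_nonneg (by linarith) hp0.le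
    have he1 : e ≤ 1 := by
      rw [he, div_le_one hp0]; linarith
    have he2 : 1/2 ≤ e := by
      rw [he, le_div_iff₀ hp0]; linarith
    have hxp : 0 ≤ x ^ p := Real.rpow_nonneg hx0.le p
    have hFnn : 0 ≤ F p u := by
      have : 0 < x ^ p + u := by linarith
      positivity
    rw [Real.norm_of_nonneg hFnn]
    have hdenle : u ^ e ≤ (x ^ p + u) ^ e :=
      Real.rpow_le_rpow hu0.le (by linarith) he0
    have h1 : F p u ≤ u ^ m * Real.exp (-u) / u ^ e := by
      apply div_le_div_of_nonneg_left (by positivity) (by positivity) hdenle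
    refine h1.trans ?_
    have heq : u ^ m * Real.exp (-u) / u ^ e = Real.exp (-u) * u ^ (m - e) := by
      rw [mul_comm, mul_div_assoc, ← Real.rpow_sub hu0]
    rw [heq]
    have hue : u ^ (m - e) ≤ u ^ (m - 1) + u ^ (m - 1/2) := by
      rcases le_total u 1 with h | h
      · have : u ^ (m - e) ≤ u ^ (m - 1) :=
          Real.rpow_le_rpow_of_exponent_ge hu0 h (by linarith)
        have h2 : (0:ℝ) ≤ u ^ (m - 1/2) := Real.rpow_nonneg hu0.le _
        linarith
      · have : u ^ (m - e) ≤ u ^ (m - 1/2) :=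
          Real.rpow_le_rpow_of_exponent_le h (by linarith)
        have h2 : (0:ℝ) ≤ u ^ (m - 1) := Real.rpow_nonneg hu0.le _
        linarith
    have hexpn : 0 ≤ Real.exp (-u) := (Real.exp_pos _).le
    calc Real.exp (-u) * u ^ (m - e)
        ≤ Real.exp (-u) * (u ^ (m - 1) + u ^ (m - 1/2)) :=
          mul_le_mul_of_nonneg_left hue hexpn
      _ = g u := by simp [g]; ring
  -- measurability
  have hmeas : ∀ p : ℝ, 2 ≤ p →
      AEStronglyMeasurable (F p) (volume.restrict (Ioi 0)) := by
    intro p hp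
    apply ContinuousOn.aestronglyMeasurable (s := Ioi 0) ?_ measurableSet_Ioi
    intro u hu
    have hu0 : (0:ℝ) < u := hu
    have hxp : 0 ≤ x ^ p := Real.rpow_nonneg hx0.le p
    have hden : (0:ℝ) < x ^ p + u := by linarith
    apply ContinuousWithinAt.div
    · exact (((Real.continuousAt_rpow_const u m (Or.inl hu0.ne')).continuousWithinAt).mul
        ((Real.continuous_exp.comp continuous_neg).continuousWithinAt))
    · exact ((Real.continuousAt_rpow_const (x ^ p + u) ((p-1)/p)
        (Or.inl hden.ne')).comp (by fun_prop)).continuousWithinAt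
    · exact (Real.rpow_pos_of_pos hden _).ne'
  -- integrability of bound
  have hgint : Integrable g (volume.restrict (Ioi 0)) := by
    have h1 := Real.GammaIntegral_convergent hm
    have h2 := Real.GammaIntegral_convergent (s := m + 1/2) (by linarith)
    have h2' : IntegrableOn (fun u => Real.exp (-u) * u ^ (m - 1/2)) (Ioi 0) := by
      have : m + 1/2 - 1 = m - 1/2 := by ring
      rwa [this] at h2
    exact h1.add h2'
  have key : Tendsto (fun p => ∫ u in Ioi (0:ℝ), F p u) atTop
      (nhds (∫ u in Ioi (0:ℝ), Real.exp (-u) * u ^ (m - 1))) := by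
    apply tendsto_integral_filter_of_dominated_convergence g
    · filter_upwards [eventually_ge_atTop (2:ℝ)] with p hp using hmeas p hp
    · filter_upwards [eventually_ge_atTop (2:ℝ)] with p hp
      filter_upwards [ae_restrict_mem measurableSet_Ioi] with u hu
      exact hbound p hp u hu
    · exact hgint
    · filter_upwards [ae_restrict_mem measurableSet_Ioi] with u hu
      exact hlim u hu
  have hG : (∫ u in Ioi (0:ℝ), Real.exp (-u) * u ^ (m - 1)) = Real.Gamma m :=
    (Real.Gamma_eq_integral hm).symm
  rw [hG] at key
  have hfinal := key.const_mul (1 / Real.Gamma (m + 1))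
  have hval : (1 / Real.Gamma (m + 1)) * Real.Gamma m = 1 / m := by
    rw [Real.Gamma_add_one hm.ne']
    have hG0 : Real.Gamma m ≠ 0 := (Real.Gamma_pos_of_pos hm).ne'
    field_simp
  rw [hval] at hfinal
  exact hfinal
end

section
/- For p > 1, m > -1 and x > 0, V_m^p(x) ≤ (x^p + m)^{-(p-1)/p} when m ≥ 0, and V_m^p(x) ≥ (x^p + m + 1)^{-(p-1)/p}. -/
open Real MeasureTheory Set Filter Topology

lemma VpAux.integrable_rpow_exp {a : ℝ} (ha : -1 < a) :
    IntegrableOn (fun u : ℝ => u ^ a * Real.exp (-u)) (Set.Ioi 0) := by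
  have h := Real.GammaIntegral_convergent (show (0:ℝ) < a + 1 by linarith)
  refine h.congr_fun (fun x hx => ?_) measurableSet_Ioi
  simp [add_sub_cancel_right, mul_comm]

lemma VpAux.cont_rpow {a : ℝ} : ContinuousOn (fun u : ℝ => u ^ a) (Set.Ioi 0) :=
  fun u hu => (Real.continuousAt_rpow_const u a (Or.inl (ne_of_gt hu))).continuousWithinAt

lemma VpAux.integrable_div {a : ℝ} (ha : -1 < a) {D : ℝ → ℝ} (hD : ContinuousOn D (Set.Ioi 0))
    {d : ℝ} (hd : 0 < d) (hDd : ∀ u ∈ Set.Ioi (0:ℝ), d ≤ D u) :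
    IntegrableOn (fun u : ℝ => u ^ a * Real.exp (-u) / D u) (Set.Ioi 0) := by
  have hint : IntegrableOn (fun u : ℝ => d⁻¹ * (u ^ a * Real.exp (-u))) (Set.Ioi 0) :=
    (VpAux.integrable_rpow_exp ha).const_mul _
  refine hint.mono' ?_ ?_
  · refine ContinuousOn.aestronglyMeasurable ?_ measurableSet_Ioi
    exact (VpAux.cont_rpow.mul (Real.continuous_exp.comp continuous_neg).continuousOn).div hD
      (fun u hu => (hd.trans_le (hDd u hu)).ne')
  · rw [ae_restrict_iff' measurableSet_Ioi]
    filter_upwards with u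
    intro hu
    have hu0 : (0:ℝ) < u := hu
    have h1 : 0 < D u := hd.trans_le (hDd u hu)
    have h2 : 0 ≤ u ^ a * Real.exp (-u) := by positivity
    rw [Real.norm_eq_abs, abs_of_nonneg (by positivity)]
    rw [div_le_iff₀ h1, mul_comm d⁻¹, mul_assoc]
    refine le_mul_of_one_le_right h2 ?_
    rw [inv_mul_eq_div, le_div_iff₀ hd, one_mul]
    exact hDd u hu

lemma VpAux.I0 {m : ℝ} (hm : -1 < m) :
    ∫ u in Set.Ioi (0:ℝ), u ^ m * Real.exp (-u) = Real.Gamma (m + 1) := by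
  rw [Real.Gamma_eq_integral (by linarith : (0:ℝ) < m + 1)]
  exact setIntegral_congr_fun measurableSet_Ioi fun x hx => by
    simp [add_sub_cancel_right, mul_comm]

lemma VpAux.I1 {m : ℝ} (hm : -1 < m) :
    ∫ u in Set.Ioi (0:ℝ), u ^ m * Real.exp (-u) * u = (m + 1) * Real.Gamma (m + 1) := by
  have h1 : ∫ u in Set.Ioi (0:ℝ), u ^ m * Real.exp (-u) * u
      = ∫ u in Set.Ioi (0:ℝ), u ^ (m + 1) * Real.exp (-u) := by
    refine setIntegral_congr_fun measurableSet_Ioi fun u hu => ?_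
    have hu0 : (0:ℝ) < u := hu
    rw [Real.rpow_add_one hu0.ne']
    ring
  rw [h1, VpAux.I0 (by linarith : (-1:ℝ) < m + 1),
    Real.Gamma_add_one (by linarith : m + 1 ≠ 0)]

lemma VpAux.ibp {m c : ℝ} (hm : -1 < m) (hc : 0 < c) :
    (c + m) * ∫ u in Set.Ioi (0:ℝ), u ^ m * Real.exp (-u) / (c + u) ≤ Real.Gamma (m + 1) := by
  have hm1 : (-1:ℝ) < m + 1 := by linarith
  have hcont1 : ContinuousOn (fun u : ℝ => c + u) (Set.Ioi 0) :=
    (continuous_const.add continuous_id).continuousOn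
  have hcont2 : ContinuousOn (fun u : ℝ => (c + u) * (c + u)) (Set.Ioi 0) := hcont1.mul hcont1
  have hbd1 : ∀ u ∈ Set.Ioi (0:ℝ), c ≤ c + u := fun u hu => by
    have : (0:ℝ) < u := hu; linarith
  have hbd2 : ∀ u ∈ Set.Ioi (0:ℝ), c * c ≤ (c + u) * (c + u) := fun u hu => by
    have : (0:ℝ) < u := hu; nlinarith
  have hA : IntegrableOn (fun u : ℝ => u ^ m * Real.exp (-u) / (c + u)) (Set.Ioi 0) :=
    VpAux.integrable_div hm hcont1 hc hbd1
  have hB : IntegrableOn (fun u : ℝ => u ^ (m+1) * Real.exp (-u) / (c + u)) (Set.Ioi 0) :=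
    VpAux.integrable_div hm1 hcont1 hc hbd1
  have hC : IntegrableOn (fun u : ℝ => u ^ (m+1) * Real.exp (-u) / ((c + u) * (c + u)))
      (Set.Ioi 0) := VpAux.integrable_div hm1 hcont2 (mul_pos hc hc) hbd2
  have hM : IntegrableOn (fun u : ℝ => u ^ m * Real.exp (-u) / ((c + u) * (c + u)))
      (Set.Ioi 0) := VpAux.integrable_div hm hcont2 (mul_pos hc hc) hbd2
  have hderiv : ∀ u ∈ Set.Ioi (0:ℝ), HasDerivAt (fun u => u ^ (m+1) * Real.exp (-u) / (c + u))
      ((m+1) * (u ^ m * Real.exp (-u) / (c + u))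
      - u ^ (m+1) * Real.exp (-u) / (c + u)
      - u ^ (m+1) * Real.exp (-u) / ((c + u) * (c + u))) u := by
    intro u hu
    have hu0 : (0:ℝ) < u := hu
    have hcu : (0:ℝ) < c + u := by linarith
    have h₁ : HasDerivAt (fun v : ℝ => v ^ (m+1)) ((m+1) * u ^ m) u := by
      have := Real.hasDerivAt_rpow_const (x := u) (p := m+1) (Or.inl hu0.ne')
      simpa [add_sub_cancel_right] using this
    have h₂ : HasDerivAt (fun v : ℝ => Real.exp (-v)) (-Real.exp (-u)) u := by
      simpa using ((hasDerivAt_id u).neg).exp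
    have hn : HasDerivAt (fun v : ℝ => v ^ (m+1) * Real.exp (-v))
        ((m+1) * u ^ m * Real.exp (-u) + u ^ (m+1) * -Real.exp (-u)) u := h₁.mul h₂
    have hg : HasDerivAt (fun v : ℝ => c + v) 1 u := by
      simpa using (hasDerivAt_id u).const_add c
    have hdiv := hn.div hg hcu.ne'
    refine hdiv.congr_deriv ?_
    have hrw : u ^ (m+1) = u ^ m * u := Real.rpow_add_one hu0.ne' m
    simp only [hrw]
    field_simp
    ring
  have hcont : ContinuousWithinAt (fun u : ℝ => u ^ (m+1) * Real.exp (-u) / (c + u)) (Set.Ici 0) 0 := by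
    refine ContinuousAt.continuousWithinAt ?_
    have h₁ : ContinuousAt (fun v : ℝ => v ^ (m+1)) 0 :=
      Real.continuousAt_rpow_const 0 (m+1) (Or.inr (by linarith))
    exact (h₁.mul (Real.continuous_exp.comp continuous_neg).continuousAt).div
      (continuous_const.add continuous_id).continuousAt (by simpa using hc.ne')
  have htop : Tendsto (fun u : ℝ => u ^ (m+1) * Real.exp (-u) / (c + u)) atTop (𝓝 0) := by
    have h1 : Tendsto (fun u : ℝ => u ^ (m+1) * Real.exp (-u)) atTop (𝓝 0) := by
      have := tendsto_rpow_mul_exp_neg_mul_atTop_nhds_zero (m+1) 1 one_pos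
      simpa [neg_one_mul] using this
    have h2 : Tendsto (fun u : ℝ => (c + u)⁻¹) atTop (𝓝 0) :=
      tendsto_inv_atTop_zero.comp (tendsto_atTop_add_const_left _ c tendsto_id)
    have := h1.mul h2
    simpa [div_eq_mul_inv] using this
  have hint' : IntegrableOn (fun u : ℝ => (m+1) * (u ^ m * Real.exp (-u) / (c + u))
      - u ^ (m+1) * Real.exp (-u) / (c + u)
      - u ^ (m+1) * Real.exp (-u) / ((c + u) * (c + u))) (Set.Ioi 0) :=
    ((hA.const_mul (m+1)).sub hB).sub hC
  have hFTC : ∫ u in Set.Ioi (0:ℝ), ((m+1) * (u ^ m * Real.exp (-u) / (c + u))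
      - u ^ (m+1) * Real.exp (-u) / (c + u)
      - u ^ (m+1) * Real.exp (-u) / ((c + u) * (c + u)))
      = 0 - (0:ℝ) ^ (m+1) * Real.exp (-(0:ℝ)) / (c + 0) :=
    integral_Ioi_of_hasDerivAt_of_tendsto hcont hderiv hint' htop
  have hG0 : (0:ℝ) ^ (m+1) * Real.exp (-(0:ℝ)) / (c + 0) = 0 := by
    simp [Real.zero_rpow (by linarith : m + 1 ≠ 0)]
  have hsplit : ∫ u in Set.Ioi (0:ℝ), ((m+1) * (u ^ m * Real.exp (-u) / (c + u))
      - u ^ (m+1) * Real.exp (-u) / (c + u)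
      - u ^ (m+1) * Real.exp (-u) / ((c + u) * (c + u)))
      = (m+1) * (∫ u in Set.Ioi (0:ℝ), u ^ m * Real.exp (-u) / (c + u))
        - (∫ u in Set.Ioi (0:ℝ), u ^ (m+1) * Real.exp (-u) / (c + u))
        - ∫ u in Set.Ioi (0:ℝ), u ^ (m+1) * Real.exp (-u) / ((c + u) * (c + u)) := by
    have hA' : IntegrableOn (fun u : ℝ => (m+1) * (u ^ m * Real.exp (-u) / (c + u)))
        (Set.Ioi 0) := hA.const_mul (m+1)
    have hAB : IntegrableOn (fun u : ℝ => (m+1) * (u ^ m * Real.exp (-u) / (c + u))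
        - u ^ (m+1) * Real.exp (-u) / (c + u)) (Set.Ioi 0) := hA'.sub hB
    rw [integral_sub hAB hC, integral_sub hA' hB, integral_const_mul]
  -- B = Γ(m+1) - c A
  have hBeq : ∫ u in Set.Ioi (0:ℝ), u ^ (m+1) * Real.exp (-u) / (c + u)
      = Real.Gamma (m+1) - c * ∫ u in Set.Ioi (0:ℝ), u ^ m * Real.exp (-u) / (c + u) := by
    have : ∫ u in Set.Ioi (0:ℝ), u ^ (m+1) * Real.exp (-u) / (c + u)
        = ∫ u in Set.Ioi (0:ℝ), (u ^ m * Real.exp (-u)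
            - c * (u ^ m * Real.exp (-u) / (c + u))) := by
      refine setIntegral_congr_fun measurableSet_Ioi fun u hu => ?_
      have hu0 : (0:ℝ) < u := hu
      have hcu : (0:ℝ) < c + u := by linarith
      rw [Real.rpow_add_one hu0.ne']
      field_simp
      ring
    rw [this, integral_sub (VpAux.integrable_rpow_exp hm) (hA.const_mul c),
      integral_const_mul, VpAux.I0 hm]
  -- C = A - c M
  have hCeq : ∫ u in Set.Ioi (0:ℝ), u ^ (m+1) * Real.exp (-u) / ((c + u) * (c + u))
      = (∫ u in Set.Ioi (0:ℝ), u ^ m * Real.exp (-u) / (c + u))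
        - c * ∫ u in Set.Ioi (0:ℝ), u ^ m * Real.exp (-u) / ((c + u) * (c + u)) := by
    have : ∫ u in Set.Ioi (0:ℝ), u ^ (m+1) * Real.exp (-u) / ((c + u) * (c + u))
        = ∫ u in Set.Ioi (0:ℝ), (u ^ m * Real.exp (-u) / (c + u)
            - c * (u ^ m * Real.exp (-u) / ((c + u) * (c + u)))) := by
      refine setIntegral_congr_fun measurableSet_Ioi fun u hu => ?_
      have hu0 : (0:ℝ) < u := hu
      have hcu : (0:ℝ) < c + u := by linarith
      rw [Real.rpow_add_one hu0.ne']
      field_simp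
      ring
    rw [this, integral_sub hA (hM.const_mul c), integral_const_mul]
  have hMnn : 0 ≤ ∫ u in Set.Ioi (0:ℝ), u ^ m * Real.exp (-u) / ((c + u) * (c + u)) := by
    refine setIntegral_nonneg measurableSet_Ioi fun u hu => ?_
    have hu0 : (0:ℝ) < u := hu
    positivity
  rw [hsplit, hBeq, hCeq, hG0] at hFTC
  nlinarith [hFTC, hMnn, hc]

lemma VpAux.claim {α t : ℝ} (hα0 : 0 ≤ α) (hα1 : α ≤ 1) (ht : 0 < t) :
    1 - α * (t - 1) ≤ t ^ (-α) := by
  rcases le_or_gt (1 - α * (t - 1)) 0 with h | h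
  · exact h.trans (Real.rpow_pos_of_pos ht _).le
  · have hB : t ^ α ≤ 1 + α * (t - 1) := by
      have := rpow_one_add_le_one_add_mul_self (s := t - 1) (by linarith) hα0 hα1
      simpa using this
    have htα : 0 < t ^ α := Real.rpow_pos_of_pos ht _
    have key : (1 - α * (t - 1)) * t ^ α ≤ 1 := by nlinarith [mul_le_mul_of_nonneg_left hB h.le, sq_nonneg (α * (t - 1))]
    rw [Real.rpow_neg ht.le, ← one_div, le_div_iff₀ htα]
    exact key

lemma VpAux.tangent_convex {α y y₀ : ℝ} (hα0 : 0 ≤ α) (hα1 : α ≤ 1) (hy : 0 < y) (hy₀ : 0 < y₀) :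
    y₀ ^ (-α) - α * y₀ ^ (-α - 1) * (y - y₀) ≤ y ^ (-α) := by
  have h := VpAux.claim hα0 hα1 (div_pos hy hy₀)
  have h1 : (y / y₀) ^ (-α) = y ^ (-α) / y₀ ^ (-α) := Real.div_rpow hy.le hy₀.le _
  have h2 : y₀ ^ (-α - 1) = y₀ ^ (-α) / y₀ := by rw [Real.rpow_sub hy₀, Real.rpow_one]
  have hp : 0 < y₀ ^ (-α) := Real.rpow_pos_of_pos hy₀ _
  calc y₀ ^ (-α) - α * y₀ ^ (-α - 1) * (y - y₀)
      = (1 - α * (y / y₀ - 1)) * y₀ ^ (-α) := by rw [h2]; field_simp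
    _ ≤ (y / y₀) ^ (-α) * y₀ ^ (-α) := mul_le_mul_of_nonneg_right h hp.le
    _ = y ^ (-α) := by rw [h1, div_mul_cancel₀ _ hp.ne']

lemma VpAux.tangent_concave {α t t₀ : ℝ} (hα0 : 0 ≤ α) (hα1 : α ≤ 1) (ht : 0 < t) (ht₀ : 0 < t₀) :
    t ^ α ≤ t₀ ^ α + α * t₀ ^ (α - 1) * (t - t₀) := by
  have hB : (t / t₀) ^ α ≤ 1 + α * (t / t₀ - 1) := by
    have := rpow_one_add_le_one_add_mul_self (s := t / t₀ - 1)
      (by have := div_pos ht ht₀; linarith) hα0 hα1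
    simpa using this
  have h1 : (t / t₀) ^ α = t ^ α / t₀ ^ α := Real.div_rpow ht.le ht₀.le _
  have h2 : t₀ ^ (α - 1) = t₀ ^ α / t₀ := by rw [Real.rpow_sub ht₀, Real.rpow_one]
  have hp : 0 < t₀ ^ α := Real.rpow_pos_of_pos ht₀ _
  calc t ^ α = t ^ α / t₀ ^ α * t₀ ^ α := by rw [div_mul_cancel₀ _ hp.ne']
    _ ≤ (1 + α * (t / t₀ - 1)) * t₀ ^ α := by rw [← h1]; exact mul_le_mul_of_nonneg_right hB hp.le
    _ = t₀ ^ α + α * t₀ ^ (α - 1) * (t - t₀) := by rw [h2]; field_simp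

lemma VpAux.key_lower {m c α : ℝ} (hm : -1 < m) (hc : 0 < c) (hα0 : 0 ≤ α) (hα1 : α ≤ 1) :
    Real.Gamma (m + 1) * (c + m + 1) ^ (-α)
      ≤ ∫ u in Set.Ioi (0:ℝ), u ^ m * Real.exp (-u) / (c + u) ^ α := by
  have hy₀ : (0:ℝ) < c + m + 1 := by linarith
  have hf0 := VpAux.integrable_rpow_exp hm
  have hf1 : IntegrableOn (fun u : ℝ => u ^ m * Real.exp (-u) * u) (Set.Ioi 0) := by
    refine (VpAux.integrable_rpow_exp (show (-1:ℝ) < m + 1 by linarith)).congr_fun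
      (fun u hu => ?_) measurableSet_Ioi
    have hu0 : (0:ℝ) < u := hu
    beta_reduce; rw [Real.rpow_add_one hu0.ne']; ring
  have hJ : IntegrableOn (fun u : ℝ => u ^ m * Real.exp (-u) / (c + u) ^ α) (Set.Ioi 0) := by
    refine VpAux.integrable_div hm ?_ (Real.rpow_pos_of_pos hc α) ?_
    · refine ContinuousOn.rpow_const (continuous_const.add continuous_id).continuousOn
        (fun u hu => Or.inl ?_)
      have : (0:ℝ) < u := hu
      exact (by linarith : (0:ℝ) < c + u).ne'
    · intro u hu
      have hu0 : (0:ℝ) < u := hu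
      exact Real.rpow_le_rpow hc.le (by linarith) hα0
  set a₁ : ℝ := (c + m + 1) ^ (-α) - α * (c + m + 1) ^ (-α - 1) * (c - (c + m + 1)) with ha₁
  set a₂ : ℝ := α * (c + m + 1) ^ (-α - 1) with ha₂
  have hmono : (∫ u in Set.Ioi (0:ℝ),
        (a₁ * (u ^ m * Real.exp (-u)) - a₂ * (u ^ m * Real.exp (-u) * u)))
      ≤ ∫ u in Set.Ioi (0:ℝ), u ^ m * Real.exp (-u) / (c + u) ^ α := by
    refine setIntegral_mono_on ((hf0.const_mul a₁).sub (hf1.const_mul a₂)) hJ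
      measurableSet_Ioi ?_
    intro u hu
    have hu0 : (0:ℝ) < u := hu
    have hcu : (0:ℝ) < c + u := by linarith
    have ht := VpAux.tangent_convex hα0 hα1 hcu hy₀
    have hnn : 0 ≤ u ^ m * Real.exp (-u) := by positivity
    have hmul := mul_le_mul_of_nonneg_left ht hnn
    have hre : u ^ m * Real.exp (-u) / (c + u) ^ α
        = u ^ m * Real.exp (-u) * (c + u) ^ (-α) := by
      rw [Real.rpow_neg hcu.le, div_eq_mul_inv]
    rw [hre]
    refine le_trans (le_of_eq ?_) hmul
    rw [ha₁, ha₂]; ring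
  have hleft : (∫ u in Set.Ioi (0:ℝ),
        (a₁ * (u ^ m * Real.exp (-u)) - a₂ * (u ^ m * Real.exp (-u) * u)))
      = a₁ * Real.Gamma (m+1) - a₂ * ((m+1) * Real.Gamma (m+1)) := by
    rw [integral_sub (hf0.const_mul a₁) (hf1.const_mul a₂), integral_const_mul,
      integral_const_mul, VpAux.I0 hm, VpAux.I1 hm]
  have hfin : a₁ * Real.Gamma (m+1) - a₂ * ((m+1) * Real.Gamma (m+1))
      = Real.Gamma (m+1) * (c + m + 1) ^ (-α) := by
    rw [ha₁, ha₂]; ring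
  calc Real.Gamma (m + 1) * (c + m + 1) ^ (-α)
      = ∫ u in Set.Ioi (0:ℝ),
          (a₁ * (u ^ m * Real.exp (-u)) - a₂ * (u ^ m * Real.exp (-u) * u)) := by
        rw [hleft, hfin]
    _ ≤ _ := hmono

lemma VpAux.key_upper {m c α : ℝ} (hm : 0 ≤ m) (hc : 0 < c) (hα0 : 0 ≤ α) (hα1 : α ≤ 1) :
    (∫ u in Set.Ioi (0:ℝ), u ^ m * Real.exp (-u) / (c + u) ^ α)
      ≤ Real.Gamma (m + 1) * (c + m) ^ (-α) := by
  have hm' : (-1:ℝ) < m := by linarith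
  have hcm : (0:ℝ) < c + m := by linarith
  have ht₀pos : (0:ℝ) < (c + m)⁻¹ := inv_pos.mpr hcm
  have hf0 := VpAux.integrable_rpow_exp hm'
  have hA : IntegrableOn (fun u : ℝ => u ^ m * Real.exp (-u) / (c + u)) (Set.Ioi 0) := by
    refine VpAux.integrable_div hm' (continuous_const.add continuous_id).continuousOn hc ?_
    intro u hu
    have : (0:ℝ) < u := hu
    linarith
  have hJ : IntegrableOn (fun u : ℝ => u ^ m * Real.exp (-u) / (c + u) ^ α) (Set.Ioi 0) := by
    refine VpAux.integrable_div hm' ?_ (Real.rpow_pos_of_pos hc α) ?_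
    · refine ContinuousOn.rpow_const (continuous_const.add continuous_id).continuousOn
        (fun u hu => Or.inl ?_)
      have : (0:ℝ) < u := hu
      exact (by linarith : (0:ℝ) < c + u).ne'
    · intro u hu
      have hu0 : (0:ℝ) < u := hu
      exact Real.rpow_le_rpow hc.le (by linarith) hα0
  set b₁ : ℝ := ((c + m)⁻¹) ^ α - α * ((c + m)⁻¹) ^ (α - 1) * (c + m)⁻¹ with hb₁
  set b₂ : ℝ := α * ((c + m)⁻¹) ^ (α - 1) with hb₂
  have hb₂nn : 0 ≤ b₂ := by
    rw [hb₂]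
    positivity
  have hmono : (∫ u in Set.Ioi (0:ℝ), u ^ m * Real.exp (-u) / (c + u) ^ α)
      ≤ ∫ u in Set.Ioi (0:ℝ),
          (b₁ * (u ^ m * Real.exp (-u)) + b₂ * (u ^ m * Real.exp (-u) / (c + u))) := by
    refine setIntegral_mono_on hJ ((hf0.const_mul b₁).add (hA.const_mul b₂))
      measurableSet_Ioi ?_
    intro u hu
    have hu0 : (0:ℝ) < u := hu
    have hcu : (0:ℝ) < c + u := by linarith
    have ht := VpAux.tangent_concave hα0 hα1 (inv_pos.mpr hcu) ht₀pos
    have hnn : 0 ≤ u ^ m * Real.exp (-u) := by positivity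
    have hmul := mul_le_mul_of_nonneg_left ht hnn
    have hre : u ^ m * Real.exp (-u) / (c + u) ^ α
        = u ^ m * Real.exp (-u) * ((c + u)⁻¹) ^ α := by
      rw [Real.inv_rpow hcu.le, div_eq_mul_inv]
    rw [hre]
    refine le_trans hmul (le_of_eq ?_)
    rw [hb₁, hb₂]
    rw [div_eq_mul_inv]
    ring
  have hright : (∫ u in Set.Ioi (0:ℝ),
        (b₁ * (u ^ m * Real.exp (-u)) + b₂ * (u ^ m * Real.exp (-u) / (c + u))))
      = b₁ * Real.Gamma (m+1)
        + b₂ * ∫ u in Set.Ioi (0:ℝ), u ^ m * Real.exp (-u) / (c + u) := by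
    rw [integral_add (hf0.const_mul b₁) (hA.const_mul b₂), integral_const_mul,
      integral_const_mul, VpAux.I0 hm']
  have hibp := VpAux.ibp hm' hc
  have hAle : (∫ u in Set.Ioi (0:ℝ), u ^ m * Real.exp (-u) / (c + u))
      ≤ Real.Gamma (m+1) * (c + m)⁻¹ := by
    rw [mul_comm, inv_mul_eq_div]
    rw [le_div_iff₀ hcm, mul_comm]
    exact hibp
  have hfin : b₁ * Real.Gamma (m+1) + b₂ * (Real.Gamma (m+1) * (c + m)⁻¹)
      = Real.Gamma (m+1) * (c + m) ^ (-α) := by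
    rw [Real.rpow_neg hcm.le, ← Real.inv_rpow hcm.le, hb₁, hb₂]
    ring
  calc (∫ u in Set.Ioi (0:ℝ), u ^ m * Real.exp (-u) / (c + u) ^ α)
      ≤ ∫ u in Set.Ioi (0:ℝ),
          (b₁ * (u ^ m * Real.exp (-u)) + b₂ * (u ^ m * Real.exp (-u) / (c + u))) := hmono
    _ = b₁ * Real.Gamma (m+1)
        + b₂ * ∫ u in Set.Ioi (0:ℝ), u ^ m * Real.exp (-u) / (c + u) := hright
    _ ≤ b₁ * Real.Gamma (m+1) + b₂ * (Real.Gamma (m+1) * (c + m)⁻¹) :=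
        add_le_add_right (mul_le_mul_of_nonneg_left hAle hb₂nn) _
    _ = Real.Gamma (m+1) * (c + m) ^ (-α) := hfin


theorem stmt_12 (p m x : ℝ) (hp : 1 < p) (hm : -1 < m) (hx : 0 < x) :
    (0 ≤ m → Vp p m x ≤ (x ^ p + m) ^ (-((p - 1) / p))) ∧
    (x ^ p + m + 1) ^ (-((p - 1) / p)) ≤ Vp p m x := by
  have hp0 : (0:ℝ) < p := by linarith
  have hα0 : (0:ℝ) ≤ (p - 1) / p := div_nonneg (by linarith) hp0.le
  have hα1 : (p - 1) / p ≤ 1 := by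
    rw [div_le_one hp0]; linarith
  have hc : 0 < x ^ p := Real.rpow_pos_of_pos hx p
  have hΓ : 0 < Real.Gamma (m + 1) := Real.Gamma_pos_of_pos (by linarith)
  constructor
  · intro hm0
    have h := VpAux.key_upper (c := x ^ p) (α := (p - 1) / p) hm0 hc hα0 hα1
    unfold Vp
    calc (1 / Real.Gamma (m + 1)) *
          ∫ u in Set.Ioi (0 : ℝ), u ^ m * Real.exp (-u) / (x ^ p + u) ^ ((p - 1) / p)
        ≤ (1 / Real.Gamma (m + 1)) *
            (Real.Gamma (m + 1) * (x ^ p + m) ^ (-((p - 1) / p))) :=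
          mul_le_mul_of_nonneg_left h (by positivity)
      _ = (x ^ p + m) ^ (-((p - 1) / p)) := by field_simp
  · have h := VpAux.key_lower (c := x ^ p) (α := (p - 1) / p) hm hc hα0 hα1
    unfold Vp
    calc (x ^ p + m + 1) ^ (-((p - 1) / p))
        = (1 / Real.Gamma (m + 1)) *
            (Real.Gamma (m + 1) * (x ^ p + m + 1) ^ (-((p - 1) / p))) := by field_simp
      _ ≤ (1 / Real.Gamma (m + 1)) *
            ∫ u in Set.Ioi (0 : ℝ), u ^ m * Real.exp (-u) / (x ^ p + u) ^ ((p - 1) / p) :=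
          mul_le_mul_of_nonneg_left h (by positivity)
end

section
/- For integer N ≥ 1, the averaged potential V_av^N(x) = (1/N) ∑_{m=0}^{N-1} V_m(x) is convex on (0, ∞), and its derivative tends to -2/N as x → 0+. -/
open MeasureTheory Real Set Filter Topology

noncomputable def Vav (N : ℕ) (x : ℝ) : ℝ :=
  (1 / N) * ∑ m ∈ Finset.range N, V m x

/-- the weight `(1+t)^{-3/2}` -/
noncomputable def sdens (t : ℝ) : ℝ := ((1 + t) * Real.sqrt (1 + t))⁻¹

/-- antiderivative of sdens -/
noncomputable def sF (t : ℝ) : ℝ := -2 * (Real.sqrt (1 + t))⁻¹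

lemma sdens_nonneg {t : ℝ} (ht : 0 ≤ t) : 0 ≤ sdens t := by
  unfold sdens; positivity

lemma hasDerivAt_sF {t : ℝ} (ht : 0 ≤ t) : HasDerivAt sF (sdens t) t := by
  have h1 : (0:ℝ) < 1 + t := by linarith
  have hs : Real.sqrt (1 + t) ≠ 0 := by positivity
  have h2 : HasDerivAt (fun t : ℝ => Real.sqrt (1 + t)) (1 / (2 * Real.sqrt (1 + t))) t := by
    have := (Real.hasDerivAt_sqrt h1.ne').comp t ((hasDerivAt_id t).const_add 1)
    simpa [Function.comp_def] using this
  have h3 := (h2.inv hs).const_mul (-2 : ℝ)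
  refine h3.congr_deriv ?_
  have hsq : Real.sqrt (1 + t) ^ 2 = 1 + t := Real.sq_sqrt h1.le
  rw [hsq]
  unfold sdens
  field_simp

lemma sF_tendsto : Tendsto sF atTop (𝓝 0) := by
  have h1 : Tendsto (fun t : ℝ => Real.sqrt (1 + t)) atTop atTop := by
    apply tendsto_atTop_atTop.2
    intro b
    refine ⟨b ^ 2, fun a ha => ?_⟩
    calc b ≤ |b| := le_abs_self b
      _ = Real.sqrt (b ^ 2) := (Real.sqrt_sq_eq_abs b).symm
      _ ≤ Real.sqrt (1 + a) := Real.sqrt_le_sqrt (by linarith)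
  have := (h1.inv_tendsto_atTop).const_mul (-2 : ℝ)
  unfold sF
  simpa [neg_mul] using this

lemma sdens_integrable : IntegrableOn sdens (Ioi (0:ℝ)) :=
  integrableOn_Ioi_deriv_of_nonneg' (fun x hx => hasDerivAt_sF hx)
    (fun x hx => sdens_nonneg (le_of_lt hx)) sF_tendsto

lemma sdens_integral : ∫ t in Ioi (0:ℝ), sdens t = 2 := by
  rw [integral_Ioi_of_hasDerivAt_of_tendsto' (fun x hx => hasDerivAt_sF hx)
    sdens_integrable sF_tendsto]
  simp [sF]

/-- partial sums of the Poisson weights -/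
noncomputable def Wf (N : ℕ) (u : ℝ) : ℝ :=
  ∑ m ∈ Finset.range N, u ^ m * Real.exp (-u) / (m.factorial : ℝ)

lemma Wf_nonneg {N : ℕ} {u : ℝ} (hu : 0 ≤ u) : 0 ≤ Wf N u := by
  unfold Wf
  apply Finset.sum_nonneg
  intro m _
  positivity

lemma Wf_le_one {N : ℕ} {u : ℝ} (hu : 0 ≤ u) : Wf N u ≤ 1 := by
  have h : Wf N u = Real.exp (-u) * ∑ m ∈ Finset.range N, u ^ m / (m.factorial : ℝ) := by
    unfold Wf
    rw [Finset.mul_sum]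
    congr 1; ext m; ring
  rw [h]
  have h2 : ∑ m ∈ Finset.range N, u ^ m / (m.factorial : ℝ) ≤ Real.exp u :=
    Real.sum_le_exp_of_nonneg hu N
  calc Real.exp (-u) * ∑ m ∈ Finset.range N, u ^ m / (m.factorial : ℝ)
      ≤ Real.exp (-u) * Real.exp u := by
        apply mul_le_mul_of_nonneg_left h2 (Real.exp_nonneg _)
    _ = 1 := by rw [← Real.exp_add]; simp

lemma Wf_zero {N : ℕ} (hN : 1 ≤ N) : Wf N 0 = 1 := by
  unfold Wf
  rw [Finset.sum_eq_single_of_mem 0 (Finset.mem_range.2 hN)]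
  · simp
  · intro m _ hm
    simp [zero_pow hm]

lemma pow_mul_exp_le {u : ℝ} (hu : 0 ≤ u) (m : ℕ) :
    u ^ m * Real.exp (-u) / (m.factorial : ℝ) ≤ 1 := by
  have h : u ^ m / (m.factorial : ℝ) ≤ Real.exp u := by
    calc u ^ m / (m.factorial : ℝ)
        ≤ ∑ i ∈ Finset.range (m+1), u ^ i / (i.factorial : ℝ) := by
          exact Finset.single_le_sum (f := fun i => u ^ i / (i.factorial : ℝ))
            (fun i _ => by positivity) (Finset.self_mem_range_succ m)
      _ ≤ Real.exp u := Real.sum_le_exp_of_nonneg hu _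
  have hexp : 0 < Real.exp (-u) := Real.exp_pos _
  calc u ^ m * Real.exp (-u) / (m.factorial : ℝ)
      = (u ^ m / (m.factorial : ℝ)) * Real.exp (-u) := by ring
    _ ≤ Real.exp u * Real.exp (-u) := by
        apply mul_le_mul_of_nonneg_right h hexp.le
    _ = 1 := by rw [← Real.exp_add]; simp

lemma hasDerivAt_Wf (N : ℕ) (hN : 1 ≤ N) (u : ℝ) :
    HasDerivAt (Wf N) (-(u ^ (N-1) * Real.exp (-u) / ((N-1).factorial : ℝ))) u := by
  obtain ⟨k, rfl⟩ : ∃ k, N = k + 1 := ⟨N - 1, (Nat.succ_pred_eq_of_pos hN).symm⟩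
  simp only [Nat.add_sub_cancel]
  have hP : HasDerivAt (fun u : ℝ => ∑ m ∈ Finset.range (k+1), u ^ m / (m.factorial : ℝ))
      (∑ m ∈ Finset.range k, u ^ m / (m.factorial : ℝ)) u := by
    have h1 : HasDerivAt (fun u : ℝ => ∑ m ∈ Finset.range (k+1), u ^ m / (m.factorial : ℝ))
        (∑ m ∈ Finset.range (k+1), ((m : ℝ) * u ^ (m-1) / (m.factorial : ℝ))) u := by
      apply HasDerivAt.fun_sum
      intro m _
      exact (hasDerivAt_pow m u).div_const _
    convert h1 using 1
    rw [Finset.sum_range_succ']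
    simp only [Nat.cast_zero, zero_mul, Nat.factorial_zero, Nat.cast_one, zero_div, add_zero]
    apply Finset.sum_congr rfl
    intro i _
    rw [Nat.factorial_succ]
    have hi : ((i.factorial : ℝ)) ≠ 0 := Nat.cast_ne_zero.2 (Nat.factorial_ne_zero i)
    have hi1 : ((i:ℝ) + 1) ≠ 0 := by positivity
    simp only [Nat.add_sub_cancel]
    push_cast
    field_simp
  have hE : HasDerivAt (fun u : ℝ => Real.exp (-u)) (Real.exp (-u) * (-1)) u :=
    (hasDerivAt_neg u).exp
  have hprod := hE.mul hP
  have heq : Wf (k+1) = fun u : ℝ =>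
      Real.exp (-u) * ∑ m ∈ Finset.range (k+1), u ^ m / (m.factorial : ℝ) := by
    funext v
    unfold Wf
    rw [Finset.mul_sum]
    apply Finset.sum_congr rfl
    intro m _
    ring
  rw [heq]
  refine hprod.congr_deriv ?_
  rw [Finset.sum_range_succ]
  ring

lemma Wf_antitoneOn (N : ℕ) (hN : 1 ≤ N) : AntitoneOn (Wf N) (Ici 0) := by
  have hc : ContinuousOn (Wf N) (Ici 0) :=
    fun x _ => ((hasDerivAt_Wf N hN x).differentiableAt.continuousAt).continuousWithinAt
  apply antitoneOn_of_deriv_nonpos (convex_Ici 0) hc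
  · intro x hx
    exact ((hasDerivAt_Wf N hN x).differentiableAt).differentiableWithinAt
  · intro x hx
    rw [interior_Ici] at hx
    rw [(hasDerivAt_Wf N hN x).deriv]
    have : (0:ℝ) ≤ x := le_of_lt hx
    have h1 : 0 ≤ x ^ (N-1) * Real.exp (-x) / ((N-1).factorial : ℝ) := by positivity
    linarith

lemma Wf_continuous (N : ℕ) : Continuous (Wf N) := by
  unfold Wf
  continuity

lemma int_pow_exp (m : ℕ) : IntegrableOn (fun u : ℝ => u ^ m * Real.exp (-u)) (Ioi 0) := by
  have h := Real.GammaIntegral_convergent (s := (m : ℝ) + 1) (by positivity)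
  have h2 : ∀ u ∈ Ioi (0:ℝ), Real.exp (-u) * u ^ ((m:ℝ) + 1 - 1) = u ^ m * Real.exp (-u) := by
    intro u _
    rw [show (m:ℝ) + 1 - 1 = (m:ℝ) by ring, Real.rpow_natCast]
    ring
  exact h.congr_fun h2 measurableSet_Ioi

lemma hasDerivAt_inner (m : ℕ) {u : ℝ} (hu : 0 < u) (x : ℝ) :
    HasDerivAt (fun x : ℝ => u ^ m * Real.exp (-u) / Real.sqrt (x ^ 2 + u))
      (u ^ m * Real.exp (-u) * (-(x / ((x ^ 2 + u) * Real.sqrt (x ^ 2 + u))))) x := by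
  have hy : (0:ℝ) < x ^ 2 + u := by positivity
  have hs : Real.sqrt (x ^ 2 + u) ≠ 0 := by positivity
  have h1 : HasDerivAt (fun x : ℝ => x ^ 2 + u) (2 * x) x := by
    simpa using (hasDerivAt_pow 2 x).add_const u
  have h2 : HasDerivAt (fun x : ℝ => Real.sqrt (x ^ 2 + u))
      (1 / (2 * Real.sqrt (x ^ 2 + u)) * (2 * x)) x :=
    (Real.hasDerivAt_sqrt hy.ne').comp x h1
  have h3 := (h2.inv hs).const_mul (u ^ m * Real.exp (-u))
  have hfun : (fun x : ℝ => u ^ m * Real.exp (-u) / Real.sqrt (x ^ 2 + u))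
      = fun x : ℝ => u ^ m * Real.exp (-u) * (Real.sqrt (x ^ 2 + u))⁻¹ := by
    funext y; rw [div_eq_mul_inv]
  rw [hfun]
  refine h3.congr_deriv ?_
  have hsq : Real.sqrt (x ^ 2 + u) ^ 2 = x ^ 2 + u := Real.sq_sqrt hy.le
  rw [← hsq]
  field_simp
  rw [Real.sqrt_sq (Real.sqrt_nonneg _)]

lemma integrable_inner {x : ℝ} (hx : x ≠ 0) (m : ℕ) :
    IntegrableOn (fun u : ℝ => u ^ m * Real.exp (-u) / Real.sqrt (x ^ 2 + u)) (Ioi 0) := by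
  have hb : IntegrableOn (fun u : ℝ => u ^ m * Real.exp (-u) * |x|⁻¹) (Ioi 0) :=
    (int_pow_exp m).mul_const _
  apply hb.mono'
  · apply Measurable.aestronglyMeasurable
    fun_prop
  · filter_upwards [ae_restrict_mem measurableSet_Ioi] with u hu
    have hu' : (0:ℝ) < u := hu
    have hxpos : (0:ℝ) < |x| := abs_pos.2 hx
    have h1 : |x| ≤ Real.sqrt (x ^ 2 + u) := by
      rw [← Real.sqrt_sq_eq_abs]
      exact Real.sqrt_le_sqrt (by linarith)
    rw [Real.norm_eq_abs, abs_div, abs_of_nonneg (by positivity : (0:ℝ) ≤ u ^ m * Real.exp (-u)),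
      abs_of_nonneg (Real.sqrt_nonneg _), ← div_eq_mul_inv]
    gcongr

lemma hasDerivAt_I (m : ℕ) {x : ℝ} (hx : 0 < x) :
    HasDerivAt (fun y : ℝ => ∫ u in Ioi (0:ℝ), u ^ m * Real.exp (-u) / Real.sqrt (y ^ 2 + u))
      (∫ u in Ioi (0:ℝ),
        u ^ m * Real.exp (-u) * (-(x / ((x ^ 2 + u) * Real.sqrt (x ^ 2 + u))))) x := by
  have key := hasDerivAt_integral_of_dominated_loc_of_deriv_le
    (μ := volume.restrict (Ioi (0:ℝ)))
    (F := fun y u => u ^ m * Real.exp (-u) / Real.sqrt (y ^ 2 + u))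
    (F' := fun y u => u ^ m * Real.exp (-u) * (-(y / ((y ^ 2 + u) * Real.sqrt (y ^ 2 + u)))))
    (x₀ := x)
    (bound := fun u => u ^ m * Real.exp (-u) * ((3 * x / 2) / ((x / 2) ^ 2 * (x / 2))))
    (Metric.ball_mem_nhds x (show (0:ℝ) < x / 2 by positivity))
    (Filter.Eventually.of_forall (fun y => by
      apply Measurable.aestronglyMeasurable; fun_prop))
    (integrable_inner hx.ne' m)
    (by apply Measurable.aestronglyMeasurable; fun_prop)
    ?_ ((int_pow_exp m).mul_const _) ?_
  · exact key.2
  · filter_upwards [ae_restrict_mem measurableSet_Ioi] with u hu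
    intro y hy
    have hu' : (0:ℝ) < u := hu
    rw [Metric.mem_ball, Real.dist_eq, abs_lt] at hy
    have hy1 : x / 2 < y := by linarith [hy.1]
    have hy2 : y < 3 * x / 2 := by linarith [hy.2]
    have hypos : (0:ℝ) < y := lt_trans (by positivity) hy1
    have hsq : (x / 2) ≤ Real.sqrt (y ^ 2 + u) := by
      rw [show (x/2 : ℝ) = Real.sqrt ((x/2)^2) from (Real.sqrt_sq (by positivity)).symm]
      apply Real.sqrt_le_sqrt
      nlinarith
    have hden : (x / 2) ^ 2 ≤ y ^ 2 + u := by nlinarith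
    rw [Real.norm_eq_abs, abs_mul, abs_neg, abs_div,
      abs_of_nonneg (by positivity : (0:ℝ) ≤ u ^ m * Real.exp (-u)),
      abs_of_nonneg hypos.le,
      abs_of_nonneg (by positivity : (0:ℝ) ≤ (y ^ 2 + u) * Real.sqrt (y ^ 2 + u))]
    gcongr
  · filter_upwards [ae_restrict_mem measurableSet_Ioi] with u hu
    intro y _
    exact hasDerivAt_inner m hu y

lemma subst_lemma (m : ℕ) {x : ℝ} (hx : 0 < x) :
    ∫ u in Ioi (0:ℝ), u ^ m * Real.exp (-u) * (x / ((x ^ 2 + u) * Real.sqrt (x ^ 2 + u)))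
      = ∫ t in Ioi (0:ℝ), (x ^ 2 * t) ^ m * Real.exp (-(x ^ 2 * t)) * sdens t := by
  have hx2 : (0:ℝ) < x ^ 2 := by positivity
  have h := integral_comp_mul_left_Ioi
    (fun u : ℝ => u ^ m * Real.exp (-u) * (x / ((x ^ 2 + u) * Real.sqrt (x ^ 2 + u)))) 0 hx2
  rw [mul_zero] at h
  have h2 : ∀ t ∈ Ioi (0:ℝ),
      (x ^ 2 * t) ^ m * Real.exp (-(x ^ 2 * t)) *
        (x / ((x ^ 2 + x ^ 2 * t) * Real.sqrt (x ^ 2 + x ^ 2 * t)))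
      = (x ^ 2)⁻¹ * ((x ^ 2 * t) ^ m * Real.exp (-(x ^ 2 * t)) * sdens t) := by
    intro t ht
    have ht' : (0:ℝ) < t := ht
    have h1t : (0:ℝ) < 1 + t := by linarith
    have hfac : x ^ 2 + x ^ 2 * t = x ^ 2 * (1 + t) := by ring
    have hsqrt : Real.sqrt (x ^ 2 * (1 + t)) = x * Real.sqrt (1 + t) := by
      rw [Real.sqrt_mul (sq_nonneg x), Real.sqrt_sq hx.le]
    have hs1 : Real.sqrt (1 + t) ≠ 0 := by positivity
    rw [hfac, hsqrt]
    unfold sdens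
    field_simp
  rw [setIntegral_congr_fun measurableSet_Ioi h2, integral_const_mul, smul_eq_mul] at h
  have := mul_left_cancel₀ (inv_ne_zero hx2.ne') h
  exact this.symm

noncomputable def Kint (N : ℕ) (x : ℝ) : ℝ := ∫ t in Ioi (0:ℝ), Wf N (x ^ 2 * t) * sdens t

lemma integrable_Wsd (N : ℕ) {c : ℝ} (hc : 0 ≤ c) :
    IntegrableOn (fun t : ℝ => Wf N (c * t) * sdens t) (Ioi 0) := by
  apply sdens_integrable.mono'
  · exact (((Wf_continuous N).comp (continuous_const.mul continuous_id)).aestronglyMeasurable.mul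
      (by apply Measurable.aestronglyMeasurable; unfold sdens; fun_prop))
  · filter_upwards [ae_restrict_mem measurableSet_Ioi] with t ht
    have ht' : (0:ℝ) < t := ht
    have hct : (0:ℝ) ≤ c * t := by positivity
    rw [Real.norm_eq_abs, abs_mul, abs_of_nonneg (Wf_nonneg hct),
      abs_of_nonneg (sdens_nonneg ht'.le)]
    calc Wf N (c * t) * sdens t ≤ 1 * sdens t :=
          mul_le_mul_of_nonneg_right (Wf_le_one hct) (sdens_nonneg ht'.le)
      _ = sdens t := one_mul _

lemma integrable_term (m : ℕ) {c : ℝ} (hc : 0 ≤ c) :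
    IntegrableOn (fun t : ℝ => (c * t) ^ m * Real.exp (-(c * t)) / (m.factorial : ℝ) * sdens t)
      (Ioi 0) := by
  apply sdens_integrable.mono'
  · apply Measurable.aestronglyMeasurable; unfold sdens; fun_prop
  · filter_upwards [ae_restrict_mem measurableSet_Ioi] with t ht
    have ht' : (0:ℝ) < t := ht
    have hct : (0:ℝ) ≤ c * t := by positivity
    rw [Real.norm_eq_abs, abs_mul,
      abs_of_nonneg (by positivity : (0:ℝ) ≤ (c * t) ^ m * Real.exp (-(c * t)) / (m.factorial : ℝ)),
      abs_of_nonneg (sdens_nonneg ht'.le)]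
    calc (c * t) ^ m * Real.exp (-(c * t)) / (m.factorial : ℝ) * sdens t ≤ 1 * sdens t :=
          mul_le_mul_of_nonneg_right (pow_mul_exp_le hct m) (sdens_nonneg ht'.le)
      _ = sdens t := one_mul _

lemma hasDerivAt_Vav (N : ℕ) {x : ℝ} (hx : 0 < x) :
    HasDerivAt (Vav N) (-((1 / (N:ℝ)) * Kint N x)) x := by
  have hV : ∀ m : ℕ, V (m:ℝ) = fun y : ℝ =>
      (1 / (m.factorial : ℝ)) * ∫ u in Ioi (0:ℝ), u ^ m * Real.exp (-u) / Real.sqrt (y ^ 2 + u) := by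
    intro m
    funext y
    unfold V
    rw [Real.Gamma_nat_eq_factorial]
    simp only [Real.rpow_natCast]
  have hsum : HasDerivAt (fun y : ℝ => ∑ m ∈ Finset.range N, V (m:ℝ) y)
      (∑ m ∈ Finset.range N, (1 / (m.factorial : ℝ)) *
        ∫ u in Ioi (0:ℝ),
          u ^ m * Real.exp (-u) * (-(x / ((x ^ 2 + u) * Real.sqrt (x ^ 2 + u))))) x := by
    apply HasDerivAt.fun_sum
    intro m _
    rw [hV m]
    exact (hasDerivAt_I m hx).const_mul _
  have hterm : ∀ m ∈ Finset.range N,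
      (1 / (m.factorial : ℝ)) * (∫ u in Ioi (0:ℝ),
        u ^ m * Real.exp (-u) * (-(x / ((x ^ 2 + u) * Real.sqrt (x ^ 2 + u)))))
      = -∫ t in Ioi (0:ℝ),
          (x ^ 2 * t) ^ m * Real.exp (-(x ^ 2 * t)) / (m.factorial : ℝ) * sdens t := by
    intro m _
    have h1 : (∫ u in Ioi (0:ℝ),
        u ^ m * Real.exp (-u) * (-(x / ((x ^ 2 + u) * Real.sqrt (x ^ 2 + u)))))
        = -∫ u in Ioi (0:ℝ), u ^ m * Real.exp (-u) * (x / ((x ^ 2 + u) * Real.sqrt (x ^ 2 + u))) := by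
      rw [← integral_neg]
      congr 1
      funext u
      ring
    rw [h1, subst_lemma m hx, mul_neg]
    congr 1
    rw [← integral_const_mul]
    apply setIntegral_congr_fun measurableSet_Ioi
    intro t _
    ring
  have hsum2 : (∑ m ∈ Finset.range N, (1 / (m.factorial : ℝ)) *
        ∫ u in Ioi (0:ℝ),
          u ^ m * Real.exp (-u) * (-(x / ((x ^ 2 + u) * Real.sqrt (x ^ 2 + u)))))
      = -(Kint N x) := by
    rw [Finset.sum_congr rfl hterm, Finset.sum_neg_distrib]
    congr 1
    rw [← integral_finset_sum _ (fun m _ => integrable_term m (by positivity : (0:ℝ) ≤ x ^ 2))]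
    unfold Kint Wf
    congr 1
    funext t
    rw [Finset.sum_mul]
  rw [hsum2] at hsum
  have hVav : Vav N = fun y : ℝ => (1 / (N:ℝ)) * ∑ m ∈ Finset.range N, V (m:ℝ) y := rfl
  rw [hVav]
  have := hsum.const_mul (1 / (N:ℝ))
  refine this.congr_deriv ?_
  ring

theorem stmt_16 (N : ℕ) (hN : 1 ≤ N) :
    ConvexOn ℝ (Set.Ioi (0 : ℝ)) (Vav N) ∧
    Filter.Tendsto (fun x => deriv (Vav N) x) (nhdsWithin 0 (Set.Ioi 0))
      (nhds (-2 / N)) := by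
  have hderiv : ∀ x ∈ Ioi (0:ℝ), deriv (Vav N) x = -((1 / (N:ℝ)) * Kint N x) :=
    fun x hx => (hasDerivAt_Vav N hx).deriv
  have hKmono : AntitoneOn (Kint N) (Ioi 0) := by
    intro x hx y hy hxy
    have hx' : (0:ℝ) < x := hx
    have hy' : (0:ℝ) < y := hy
    apply setIntegral_mono_on (integrable_Wsd N (by positivity : (0:ℝ) ≤ y ^ 2))
      (integrable_Wsd N (by positivity : (0:ℝ) ≤ x ^ 2)) measurableSet_Ioi
    intro t ht
    have ht' : (0:ℝ) < t := ht
    apply mul_le_mul_of_nonneg_right _ (sdens_nonneg ht'.le)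
    apply Wf_antitoneOn N hN (mem_Ici.2 (by positivity)) (mem_Ici.2 (by positivity))
    have : x ^ 2 ≤ y ^ 2 := by nlinarith
    nlinarith
  constructor
  · apply MonotoneOn.convexOn_of_deriv (convex_Ioi 0)
    · exact fun x hx =>
        ((hasDerivAt_Vav N hx).differentiableAt.continuousAt).continuousWithinAt
    · rw [interior_Ioi]
      exact fun x hx => (hasDerivAt_Vav N hx).differentiableAt.differentiableWithinAt
    · rw [interior_Ioi]
      intro x hx y hy hxy
      rw [hderiv x hx, hderiv y hy]
      have hK : Kint N y ≤ Kint N x := hKmono hx hy hxy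
      have hN0 : (0:ℝ) ≤ 1 / (N:ℝ) := by positivity
      nlinarith
  · have hKlim : Tendsto (Kint N) (𝓝[>] (0:ℝ)) (𝓝 2) := by
      have h := tendsto_integral_filter_of_dominated_convergence
        (μ := volume.restrict (Ioi (0:ℝ)))
        (l := 𝓝[>] (0:ℝ))
        (F := fun x t => Wf N (x ^ 2 * t) * sdens t)
        (f := sdens)
        (bound := sdens)
        (Filter.Eventually.of_forall (fun x =>
          (show Continuous (fun t : ℝ => Wf N (x ^ 2 * t)) from
            (Wf_continuous N).comp (continuous_const.mul continuous_id)).aestronglyMeasurable.mul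
            (by apply Measurable.aestronglyMeasurable; unfold sdens; fun_prop)))
        ?_ sdens_integrable ?_
      · unfold Kint
        rwa [sdens_integral] at h
      · apply Filter.Eventually.of_forall
        intro x
        filter_upwards [ae_restrict_mem measurableSet_Ioi] with t ht
        have ht' : (0:ℝ) < t := ht
        have hct : (0:ℝ) ≤ x ^ 2 * t := by positivity
        rw [Real.norm_eq_abs, abs_mul, abs_of_nonneg (Wf_nonneg hct),
          abs_of_nonneg (sdens_nonneg ht'.le)]
        calc Wf N (x ^ 2 * t) * sdens t ≤ 1 * sdens t :=
              mul_le_mul_of_nonneg_right (Wf_le_one hct) (sdens_nonneg ht'.le)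
          _ = sdens t := one_mul _
      · filter_upwards [ae_restrict_mem measurableSet_Ioi] with t ht
        have h1 : Tendsto (fun x : ℝ => x ^ 2 * t) (𝓝[>] (0:ℝ)) (𝓝 0) := by
          have : Tendsto (fun x : ℝ => x ^ 2 * t) (𝓝 0) (𝓝 (0 ^ 2 * t)) := by
            exact ((continuous_pow 2).mul continuous_const).tendsto 0
          simpa using this.mono_left nhdsWithin_le_nhds
        have h2 : Tendsto (fun x : ℝ => Wf N (x ^ 2 * t)) (𝓝[>] (0:ℝ)) (𝓝 (Wf N 0)) :=
          ((Wf_continuous N).tendsto 0).comp h1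
        rw [Wf_zero hN] at h2
        simpa using h2.mul_const (sdens t)
    have h3 : Tendsto (fun x => -((1 / (N:ℝ)) * Kint N x)) (𝓝[>] (0:ℝ))
        (𝓝 (-((1 / (N:ℝ)) * 2))) := (hKlim.const_mul _).neg
    have h4 : -((1 / (N:ℝ)) * 2) = -2 / (N:ℝ) := by ring
    rw [h4] at h3
    apply h3.congr'
    filter_upwards [self_mem_nhdsWithin] with x hx
    exact (hderiv x hx).symm
end

section
/- Define polynomials P̃_m^p(z) by P̃_0^p(z) = 1, P̃_1^p(z) = z, and m P̃_m^p(z) = (m-1+z) P̃_{m-1}^p(z) + (1/p - z) P̃_{m-2}^p(z) for m ≥ 2. Then for every integer m ≥ 0 all coefficients of P̃_m^p are nonnegative (positive where nonzero), assuming p > 0. -/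
noncomputable def Pt (p : ℝ) : ℕ → Polynomial ℝ
  | 0 => 1
  | 1 => Polynomial.X
  | (m + 2) =>
      (((m : ℝ) + 2)⁻¹) •
        ((Polynomial.C ((m : ℝ) + 1) + Polynomial.X) * Pt p (m + 1) +
          (Polynomial.C (1 / p) - Polynomial.X) * Pt p m)

noncomputable def Dt (p : ℝ) (m : ℕ) : Polynomial ℝ :=
  ((m : ℝ) + 1) • Pt p (m + 1) - Polynomial.X * Pt p m

lemma Pt_succ_eq (p : ℝ) (m : ℕ) :
    ((m : ℝ) + 1) • Pt p (m + 1) = Dt p m + Polynomial.X * Pt p m := by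
  simp [Dt]

lemma Dt_zero (p : ℝ) : Dt p 0 = 0 := by
  simp [Dt, Pt]

lemma Pt_rec (p : ℝ) (m : ℕ) :
    ((m : ℝ) + 2) • Pt p (m + 2) =
      (Polynomial.C ((m : ℝ) + 1) + Polynomial.X) * Pt p (m + 1) +
        (Polynomial.C (1 / p) - Polynomial.X) * Pt p m := by
  have h : Pt p (m + 2) =
      (((m : ℝ) + 2)⁻¹) •
        ((Polynomial.C ((m : ℝ) + 1) + Polynomial.X) * Pt p (m + 1) +
          (Polynomial.C (1 / p) - Polynomial.X) * Pt p m) := rfl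
  rw [h, smul_smul, mul_inv_cancel₀ (by positivity), one_smul]

lemma Dt_succ (p : ℝ) (m : ℕ) :
    Dt p (m + 1) = Dt p m + Polynomial.C (1 / p) * Pt p m := by
  have h1 : Dt p (m + 1) =
      ((m : ℝ) + 2) • Pt p (m + 2) - Polynomial.X * Pt p (m + 1) := by
    simp [Dt]
    ring_nf
  rw [h1, Pt_rec, Dt]
  rw [Polynomial.smul_eq_C_mul]
  ring

lemma key_s17 (p : ℝ) (hp : 0 < p) :
    ∀ m : ℕ, (∀ k, 0 ≤ (Pt p m).coeff k) ∧ (∀ k, 0 ≤ (Dt p m).coeff k) := by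
  intro m
  induction m with
  | zero =>
    constructor
    · intro k
      have h : Pt p 0 = 1 := rfl
      rw [h, Polynomial.coeff_one]
      split <;> norm_num
    · intro k
      rw [Dt_zero]
      simp
  | succ n ih =>
    obtain ⟨hP, hD⟩ := ih
    have hXP : ∀ k, 0 ≤ (Polynomial.X * Pt p n).coeff k := by
      intro k
      cases k with
      | zero => simp [Polynomial.mul_coeff_zero]
      | succ j => rw [Polynomial.coeff_X_mul]; exact hP j
    have hP' : ∀ k, 0 ≤ (Pt p (n + 1)).coeff k := by
      intro k
      have h := congrArg (fun q => Polynomial.coeff q k) (Pt_succ_eq p n)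
      simp only [Polynomial.coeff_smul, Polynomial.coeff_add, smul_eq_mul] at h
      have hpos : (0 : ℝ) < (n : ℝ) + 1 := by positivity
      nlinarith [hD k, hXP k]
    refine ⟨hP', ?_⟩
    intro k
    rw [Dt_succ]
    rw [Polynomial.coeff_add, Polynomial.coeff_C_mul]
    exact add_nonneg (hD k) (mul_nonneg (by positivity) (hP k))

theorem stmt_17 (p : ℝ) (hp : 0 < p) (m k : ℕ) :
    0 ≤ (Pt p m).coeff k := by
  exact (key_s17 p hp m).1 k
end

section
/- With P̃_m^p as defined by the recursion P̃_0^p = 1, P̃_1^p(z) = z, m P̃_m^p(z) = (m-1+z) P̃_{m-1}^p(z) + (1/p - z) P̃_{m-2}^p(z): if m is even then P̃_m^p(z) ≥ 0 for all real z, and if m is odd then P̃_m^p has exactly one real root z_m with -(m-1) ≤ z_m ≤ 0; moreover the roots z_1 > z_3 > z_5 > ... are strictly decreasing. -/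
open Polynomial


lemma Pt_eval (p : ℝ) (m : ℕ) (z : ℝ) :
    (Pt p (m+2)).eval z = ((m:ℝ)+2)⁻¹ * (((m:ℝ)+1+z) * (Pt p (m+1)).eval z
      + (1/p - z) * (Pt p m).eval z) := by
  rw [Pt]; simp; ring

lemma Pt_deriv (p : ℝ) (m : ℕ) (z : ℝ) :
    ((Pt p (m+1)).derivative).eval z = (Pt p m).eval z := by
  induction m using Nat.strong_induction_on with
  | _ m ih =>
    match m with
    | 0 => simp [Pt]
    | 1 =>
      show ((Pt p (0+2)).derivative).eval z = _
      rw [Pt]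
      simp [Pt]; ring
    | (n+2) =>
      have h1 := ih (n+1) (by omega)
      have h0 := ih n (by omega)
      have hrec := Pt_eval p n z
      have hn3 : ((n:ℝ)+3) ≠ 0 := by positivity
      have hn2 : ((n:ℝ)+2) ≠ 0 := by positivity
      show ((Pt p ((n+1)+2)).derivative).eval z = _
      rw [Pt]
      simp only [derivative_smul, derivative_add, derivative_mul, derivative_C,
        derivative_X, derivative_sub, eval_smul, eval_add, eval_mul, eval_sub,
        eval_C, eval_X, zero_add, one_mul, zero_mul, mul_one, zero_sub, add_zero,
        smul_eq_mul, Nat.cast_add, Nat.cast_one, neg_mul, push_cast]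
      rw [h1, h0]
      field_simp at hrec ⊢
      simp only [eval_neg]; nlinarith [hrec]




lemma Pt_hasDerivAt (p : ℝ) (m : ℕ) (x : ℝ) :
    HasDerivAt (fun z => (Pt p (m+1)).eval z) ((Pt p m).eval x) x := by
  have := (Pt p (m+1)).hasDerivAt x
  rwa [Pt_deriv] at this

lemma big (p : ℝ) (hp : 0 < p) (k : ℕ) :
    (∀ z : ℝ, 0 < (Pt p (2*k)).eval z) ∧
    StrictMono (fun z => (Pt p (2*k+1)).eval z) ∧
    ∃ r : ℝ, -(2*(k:ℝ)) ≤ r ∧ r ≤ 0 ∧ (Pt p (2*k+1)).eval r = 0 := by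
  induction k with
  | zero =>
    refine ⟨by simp [Pt], ?_, 0, by norm_num, le_refl 0, by simp [Pt]⟩
    show StrictMono (fun z : ℝ => (Pt p 1).eval z); simp only [Pt, eval_X]; exact strictMono_id
  | succ k ih =>
    obtain ⟨hE, hM, r, hr1, hr2, hr0⟩ := ih
    have h2k2 : 2*(k+1) = 2*k+2 := by ring
    have h2k3 : 2*k+2+1 = (2*k+1)+2 := by omega
    rw [h2k2, h2k3]
    have hpinv : (0:ℝ) < 1/p := by positivity
    -- even positivity
    have castk : ((2*k : ℕ) : ℝ) = 2*(k:ℝ) := by push_cast; ring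
    have hfr : 0 < (Pt p (2*k+2)).eval r := by
      rw [Pt_eval, castk, hr0, mul_zero, zero_add]
      have h5 : (0:ℝ) < 1/p - r := by linarith
      exact mul_pos (by positivity) (mul_pos h5 (hE r))
    have hmono : StrictMonoOn (fun z => (Pt p (2*k+2)).eval z) (Set.Ici r) := by
      apply strictMonoOn_of_deriv_pos (convex_Ici r)
      · exact (Pt p (2*k+2)).continuous.continuousOn
      · intro x hx
        rw [interior_Ici] at hx
        rw [(Pt_hasDerivAt p (2*k+1) x).deriv]
        simpa [hr0] using hM hx
    have hanti : StrictAntiOn (fun z => (Pt p (2*k+2)).eval z) (Set.Iic r) := by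
      apply strictAntiOn_of_deriv_neg (convex_Iic r)
      · exact (Pt p (2*k+2)).continuous.continuousOn
      · intro x hx
        rw [interior_Iic] at hx
        rw [(Pt_hasDerivAt p (2*k+1) x).deriv]
        simpa [hr0] using hM hx
    have hE' : ∀ z : ℝ, 0 < (Pt p (2*k+2)).eval z := by
      intro z
      rcases lt_trichotomy z r with h | h | h
      · have := hanti (Set.mem_Iic.2 h.le) (Set.mem_Iic.2 le_rfl) h
        exact lt_trans hfr this
      · rwa [h]
      · have := hmono (Set.mem_Ici.2 le_rfl) (Set.mem_Ici.2 h.le) h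
        exact lt_trans hfr this
    have hM' : StrictMono (fun z => (Pt p ((2*k+1)+2)).eval z) := by
      apply strictMono_of_deriv_pos
      intro x
      have : (2*k+1)+2 = (2*k+2)+1 := by ring
      rw [this, (Pt_hasDerivAt p (2*k+2) x).deriv]
      exact hE' x
    refine ⟨hE', hM', ?_⟩
    -- root existence
    set a : ℝ := -(2*((k:ℝ)+1)) with ha
    have castk1 : ((2*k+1 : ℕ) : ℝ) = 2*(k:ℝ)+1 := by push_cast; ring
    have hfa : (Pt p ((2*k+1)+2)).eval a < 0 := by
      rw [Pt_eval, castk1]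
      have h1 : (2*(k:ℝ)+1+1+a) = 0 := by rw [ha]; ring
      have h2 : (Pt p (2*k+1)).eval a < 0 := by
        have hlt : a < r := by rw [ha]; linarith
        simpa [hr0] using hM hlt
      have h3 : (0:ℝ) < 1/p - a := by rw [ha]; linarith
      rw [h1, zero_mul, zero_add]
      have hc : (0:ℝ) < (2*(k:ℝ)+1+2)⁻¹ := by positivity
      exact mul_neg_of_pos_of_neg hc (mul_neg_of_pos_of_neg h3 h2)
    have hf0 : 0 ≤ (Pt p ((2*k+1)+2)).eval 0 := by
      rw [Pt_eval, castk1]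
      have h2 : 0 ≤ (Pt p (2*k+1)).eval 0 := by
        rcases eq_or_lt_of_le hr2 with h | h
        · subst h; exact le_of_eq hr0.symm
        · have := hM h
          simp only [hr0] at this
          exact this.le
      have h1 : 0 < (Pt p (2*k+1+1)).eval 0 := hE' 0
      have hc : (0:ℝ) < (2*(k:ℝ)+1+2)⁻¹ := by positivity
      have c2 : (0:ℝ) ≤ 2*(k:ℝ)+1+1+0 := by positivity
      have c3 : (0:ℝ) ≤ 1/p - 0 := by rw [sub_zero]; exact hpinv.le
      exact mul_nonneg hc.le (add_nonneg (mul_nonneg c2 h1.le) (mul_nonneg c3 h2))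
    have ha0 : a ≤ 0 := by
      have : (0:ℝ) ≤ 2*((k:ℝ)+1) := by positivity
      rw [ha]; linarith
    have := intermediate_value_Icc ha0 (Pt p ((2*k+1)+2)).continuous.continuousOn
    have h0mem : (0:ℝ) ∈ Set.Icc ((Pt p ((2*k+1)+2)).eval a) ((Pt p ((2*k+1)+2)).eval 0) :=
      ⟨hfa.le, hf0⟩
    obtain ⟨r', hr'mem, hr'eq⟩ := this h0mem
    exact ⟨r', by push_cast; linarith [hr'mem.1], hr'mem.2, hr'eq⟩




lemma roots_step (p : ℝ) (hp : 0 < p) (k : ℕ) (z z' : ℝ)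
    (hz : (Pt p (2*k+1)).eval z = 0) (hz' : (Pt p (2*(k+1)+1)).eval z' = 0) :
    z' < z := by
  obtain ⟨hE, hM, r, hr1, hr2, hr0⟩ := big p hp k
  obtain ⟨hE', hM', _⟩ := big p hp (k+1)
  have hzr : z = r := hM.injective (by simp only [hz, hr0])
  subst hzr
  have h2k3 : 2*(k+1)+1 = (2*k+1)+2 := by ring
  have castk1 : ((2*k+1 : ℕ) : ℝ) = 2*(k:ℝ)+1 := by push_cast; ring
  have hpos : 0 < (Pt p (2*(k+1)+1)).eval z := by
    rw [h2k3, Pt_eval, castk1, hz, mul_zero, add_zero]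
    have c1 : (0:ℝ) < 2*(k:ℝ)+1+1+z := by linarith
    have c2 : 0 < (Pt p (2*k+1+1)).eval z := by
      have e : 2*k+1+1 = 2*(k+1) := by ring
      rw [e]; exact hE' z
    positivity
  have := hM'.lt_iff_lt (a := z') (b := z)
  rw [← this, hz']
  exact hpos

lemma roots_lt (p : ℝ) (hp : 0 < p) (k k' : ℕ) (hkk : k < k') (z z' : ℝ)
    (hz : (Pt p (2*k+1)).eval z = 0) (hz' : (Pt p (2*k'+1)).eval z' = 0) :
    z' < z := by
  have h : k+1 ≤ k' := hkk
  clear hkk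
  revert z'
  induction k', h using Nat.le_induction with
  | base => exact fun z' hz' => roots_step p hp k z z' hz hz'
  | succ n hn ih =>
    intro z'' hz''
    obtain ⟨_, _, r, _, _, hr0⟩ := big p hp n
    exact lt_trans (roots_step p hp n r z'' hr0 hz'') (ih r hr0)

theorem stmt_18 (p : ℝ) (hp : 0 < p) :
    (∀ m : ℕ, Even m → ∀ z : ℝ, 0 ≤ (Pt p m).eval z) ∧
    (∀ m : ℕ, 1 ≤ m → Odd m → ∃ z : ℝ, (Pt p m).eval z = 0 ∧
      -((m : ℝ) - 1) ≤ z ∧ z ≤ 0 ∧ ∀ w : ℝ, (Pt p m).eval w = 0 → w = z) ∧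
    (∀ m m' : ℕ, Odd m → Odd m' → m < m' → ∀ z z' : ℝ,
      (Pt p m).eval z = 0 → (Pt p m').eval z' = 0 → z' < z) := by
  refine ⟨?_, ?_, ?_⟩
  · intro m hm z
    obtain ⟨k, hk⟩ := hm
    have : m = 2*k := by omega
    subst this
    exact (big p hp k).1 z |>.le
  · intro m _ hm
    obtain ⟨k, hk⟩ := hm
    subst hk
    obtain ⟨hE, hM, r, hr1, hr2, hr0⟩ := big p hp k
    refine ⟨r, hr0, ?_, hr2, ?_⟩
    · push_cast; linarith
    · intro w hw
      exact hM.injective (by simp only [hw, hr0])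
  · intro m m' hm hm' hmm z z' hz hz'
    obtain ⟨k, hk⟩ := hm
    obtain ⟨k', hk'⟩ := hm'
    subst hk; subst hk'
    exact roots_lt p hp k k' (by omega) z z' hz hz'
end
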